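/- arXiv:2306.12358 — 3 statements merged into one kernel-verified Lean document; each statement's English description precedes it below -/
import Mathlib

section
/- For the root system of type A_n realized in ℝ^{n+1} as {±(e_i - e_j) : 1 ≤ i < j ≤ n+1} (n ≥ 2), and for any root α, the number of 2-dimensional subspaces spanned by α together with a root β that is non-proportional and non-orthogonal to α equals n - 1. Consequently γ(A_n) = n - 1. -/
open scoped RealInnerProductSpace

/-- The `i`-th standard basis vector of `ℝⁿ`. -/
noncomputable def stdVec (n : ℕ) (i : Fin n) : EuclideanSpace ℝ (Fin n) :=
  EuclideanSpace.single i 1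

/-- The root system of type `A_n` realized in `ℝ^{n+1}` as `{±(e_i - e_j) : i ≠ j}`. -/
def Aroots (n : ℕ) : Set (EuclideanSpace ℝ (Fin (n + 1))) :=
  {v | ∃ i j : Fin (n + 1), i ≠ j ∧ v = stdVec (n + 1) i - stdVec (n + 1) j}

lemma stdVec_apply (N : ℕ) (i j : Fin N) : stdVec N i j = if j = i then 1 else 0 := by
  simp [stdVec, EuclideanSpace.single_apply]

lemma inner_stdVec (N : ℕ) (i j : Fin N) : ⟪stdVec N i, stdVec N j⟫ = if i = j then 1 else 0 := by
  simp [stdVec, EuclideanSpace.inner_single_left, EuclideanSpace.single_apply, eq_comm]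

lemma inner_stdVec_sub (N : ℕ) (i j k l : Fin N) :
    ⟪stdVec N i - stdVec N j, stdVec N k - stdVec N l⟫ =
      ((if i = k then (1:ℝ) else 0) - if i = l then 1 else 0)
        - ((if j = k then 1 else 0) - if j = l then 1 else 0) := by
  rw [inner_sub_left, inner_sub_right, inner_sub_right, inner_stdVec, inner_stdVec,
    inner_stdVec, inner_stdVec]

lemma span_pair_eq {V : Type*} [AddCommGroup V] [Module ℝ V] (v w x : V)
    (hx : x ∈ Submodule.span ℝ ({v, w} : Set V)) (hw : w ∈ Submodule.span ℝ ({v, x} : Set V)) :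
    Submodule.span ℝ ({v, x} : Set V) = Submodule.span ℝ ({v, w} : Set V) := by
  apply le_antisymm <;> rw [Submodule.span_le] <;> intro y hy <;> rcases hy with rfl | rfl
  · exact Submodule.subset_span (by simp)
  · exact hx
  · exact Submodule.subset_span (by simp)
  · exact hw

/-- for any root `α` of `A_n` (`n ≥ 2`), the number of two-dimensional
subspaces spanned by `α` together with a root `β` non-proportional and non-orthogonal
to `α` equals `n - 1`; consequently `γ(A_n) = n - 1`. -/
theorem stmt4 (n : ℕ) (hn : 2 ≤ n)
    (α : EuclideanSpace ℝ (Fin (n + 1))) (hα : α ∈ Aroots n) :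
    {W : Submodule ℝ (EuclideanSpace ℝ (Fin (n + 1))) |
        ∃ β ∈ Aroots n, (¬ ∃ c : ℝ, β = c • α) ∧ ⟪α, β⟫ ≠ 0 ∧
          W = Submodule.span ℝ ({α, β} : Set (EuclideanSpace ℝ (Fin (n + 1))))}.ncard
      = n - 1 := by
  obtain ⟨i, j, hij, rfl⟩ := hα
  have key : {W : Submodule ℝ (EuclideanSpace ℝ (Fin (n + 1))) |
        ∃ β ∈ Aroots n, (¬ ∃ c : ℝ, β = c • (stdVec (n + 1) i - stdVec (n + 1) j)) ∧
          ⟪stdVec (n + 1) i - stdVec (n + 1) j, β⟫ ≠ 0 ∧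
          W = Submodule.span ℝ ({stdVec (n + 1) i - stdVec (n + 1) j, β} :
            Set (EuclideanSpace ℝ (Fin (n + 1))))}
      = (fun m => Submodule.span ℝ ({stdVec (n + 1) i - stdVec (n + 1) j,
          stdVec (n + 1) i - stdVec (n + 1) m} : Set (EuclideanSpace ℝ (Fin (n + 1))))) ''
          {m : Fin (n + 1) | m ≠ i ∧ m ≠ j} := by
    ext W
    constructor
    · rintro ⟨β, ⟨k, l, hkl, rfl⟩, hprop, hinner, rfl⟩
      by_cases hki : k = i
      · subst hki
        by_cases hlj : l = j
        · subst hlj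
          exact absurd ⟨1, (one_smul ℝ _).symm⟩ hprop
        · exact ⟨l, ⟨fun h => hkl h.symm, hlj⟩, rfl⟩
      · by_cases hkj : k = j
        · subst hkj
          by_cases hli : l = i
          · subst hli
            exact absurd ⟨-1, by module⟩ hprop
          · refine ⟨l, ⟨hli, fun h => hkl h.symm⟩, ?_⟩
            refine span_pair_eq _ _ _ ?_ ?_
            · rw [Submodule.mem_span_pair]; exact ⟨1, 1, by module⟩
            · rw [Submodule.mem_span_pair]; exact ⟨-1, 1, by module⟩
        · by_cases hli : l = i
          · subst hli
            refine ⟨k, ⟨hki, hkj⟩, ?_⟩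
            refine span_pair_eq _ _ _ ?_ ?_
            · rw [Submodule.mem_span_pair]; exact ⟨0, -1, by module⟩
            · rw [Submodule.mem_span_pair]; exact ⟨0, -1, by module⟩
          · by_cases hlj : l = j
            · subst hlj
              refine ⟨k, ⟨hki, hkj⟩, ?_⟩
              refine span_pair_eq _ _ _ ?_ ?_
              · rw [Submodule.mem_span_pair]; exact ⟨1, -1, by module⟩
              · rw [Submodule.mem_span_pair]; exact ⟨1, -1, by module⟩
            · exfalso
              apply hinner
              rw [inner_stdVec_sub]
              simp [Ne.symm hki, Ne.symm hkj, Ne.symm hli, Ne.symm hlj]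
    · rintro ⟨m, ⟨hmi, hmj⟩, rfl⟩
      refine ⟨stdVec (n + 1) i - stdVec (n + 1) m, ⟨i, m, Ne.symm hmi, rfl⟩, ?_, ?_, rfl⟩
      · rintro ⟨c, hc⟩
        have h := congrArg (fun v : EuclideanSpace ℝ (Fin (n + 1)) => v m) hc
        simp only [PiLp.sub_apply, PiLp.smul_apply, smul_eq_mul, stdVec_apply] at h
        simp [hmi, hmj] at h
      · rw [inner_stdVec_sub]
        simp [Ne.symm hmi, Ne.symm hmj, (Ne.symm hij : j ≠ i), hij]
  rw [key]
  have hinj : Set.InjOn (fun m => Submodule.span ℝ ({stdVec (n + 1) i - stdVec (n + 1) j,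
      stdVec (n + 1) i - stdVec (n + 1) m} : Set (EuclideanSpace ℝ (Fin (n + 1)))))
      {m : Fin (n + 1) | m ≠ i ∧ m ≠ j} := by
    rintro m ⟨hmi, hmj⟩ m' ⟨hmi', hmj'⟩ hspan
    dsimp only at hspan
    by_contra hne
    have hmem : stdVec (n + 1) i - stdVec (n + 1) m' ∈
        Submodule.span ℝ ({stdVec (n + 1) i - stdVec (n + 1) j,
          stdVec (n + 1) i - stdVec (n + 1) m} : Set (EuclideanSpace ℝ (Fin (n + 1)))) := by
      rw [hspan]
      exact Submodule.subset_span (by simp)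
    rw [Submodule.mem_span_pair] at hmem
    obtain ⟨c, d, hcd⟩ := hmem
    have h := congrArg (fun v : EuclideanSpace ℝ (Fin (n + 1)) => v m') hcd
    simp only [PiLp.add_apply, PiLp.sub_apply, PiLp.smul_apply, smul_eq_mul,
      stdVec_apply] at h
    simp [hmi', hmj', (Ne.symm hne : m' ≠ m)] at h
  rw [Set.ncard_image_of_injOn hinj]
  have hset : {m : Fin (n + 1) | m ≠ i ∧ m ≠ j} = ↑(({i, j} : Finset (Fin (n + 1)))ᶜ) := by
    ext m; simp [and_comm]
  rw [hset, Set.ncard_coe_finset, Finset.card_compl]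
  rw [Finset.card_insert_of_notMem (by simp [hij]), Finset.card_singleton]
  simp
end

section
/- For the root system C_n (n ≥ 3) in ℝ^n, every short root α lies in exactly one irreducible admissible 2-dimensional subspace W with Ω ∩ W of type C_2, and in exactly 2(n-2) irreducible admissible 2-dimensional subspaces W with Ω ∩ W of type A_2 (6 roots, all short). -/
open scoped RealInnerProductSpace

/-- The root system of type `C_n` realized in `ℝⁿ` as `{±e_i ± e_j} ∖ {0}`. -/
def Croots (n : ℕ) : Set (EuclideanSpace ℝ (Fin n)) :=
  {v | v ≠ 0 ∧ ∃ i j : Fin n, ∃ s t : ℝ, (s = 1 ∨ s = -1) ∧ (t = 1 ∨ t = -1) ∧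
    v = s • stdVec n i + t • stdVec n j}

/-- The short roots `±e_i ± e_j` (`i ≠ j`) of `C_n`. -/
def IsShortC (n : ℕ) (v : EuclideanSpace ℝ (Fin n)) : Prop :=
  ∃ i j : Fin n, i ≠ j ∧ ∃ s t : ℝ, (s = 1 ∨ s = -1) ∧ (t = 1 ∨ t = -1) ∧
    v = s • stdVec n i + t • stdVec n j

noncomputable def comb2 (n : ℕ) (i j : Fin n) (a b : ℝ) : EuclideanSpace ℝ (Fin n) :=
  a • stdVec n i + b • stdVec n j

noncomputable def comb3 (n : ℕ) (i j k : Fin n) (a b c : ℝ) : EuclideanSpace ℝ (Fin n) :=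
  a • stdVec n i + b • stdVec n j + c • stdVec n k

namespace C8

variable {n : ℕ}

lemma stdVec_apply (i l : Fin n) : stdVec n i l = if l = i then 1 else 0 := by
  simp [stdVec, EuclideanSpace.single_apply]

lemma comb2_apply (i j l : Fin n) (a b : ℝ) :
    comb2 n i j a b l = (if l = i then a else 0) + (if l = j then b else 0) := by
  simp [comb2, stdVec, EuclideanSpace.single_apply, PiLp.add_apply, PiLp.smul_apply, mul_comm]

lemma comb3_apply (i j k l : Fin n) (a b c : ℝ) :
    comb3 n i j k a b c l =
      (if l = i then a else 0) + (if l = j then b else 0) + (if l = k then c else 0) := by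
  simp [comb3, stdVec, EuclideanSpace.single_apply, PiLp.add_apply, PiLp.smul_apply, mul_comm]

lemma pair_comb_apply (x y : ℝ) (A B : EuclideanSpace ℝ (Fin n)) (l : Fin n) :
    (x • A + y • B) l = x * A l + y * B l := by
  simp [PiLp.add_apply, PiLp.smul_apply]

lemma smul_apply' (x : ℝ) (A : EuclideanSpace ℝ (Fin n)) (l : Fin n) :
    (x • A) l = x * A l := by simp [PiLp.smul_apply]

lemma neg_apply' (A : EuclideanSpace ℝ (Fin n)) (l : Fin n) : (-A) l = -(A l) := by
  simp [PiLp.neg_apply]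

lemma zero_apply' (l : Fin n) : (0 : EuclideanSpace ℝ (Fin n)) l = 0 := rfl

lemma ne_of_coord {v w : EuclideanSpace ℝ (Fin n)} (l : Fin n) (h : v l ≠ w l) : v ≠ w :=
  fun hvw => h (by rw [hvw])

lemma unit_ne_zero {s : ℝ} (hs : s = 1 ∨ s = -1) : s ≠ 0 := by rcases hs with rfl | rfl <;> norm_num

lemma unit_sq {s : ℝ} (hs : s = 1 ∨ s = -1) : s * s = 1 := by rcases hs with rfl | rfl <;> norm_num

lemma unit_neg {s : ℝ} (hs : s = 1 ∨ s = -1) : -s = 1 ∨ -s = -1 := by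
  rcases hs with rfl | rfl <;> simp

lemma unit_mul {s t : ℝ} (hs : s = 1 ∨ s = -1) (ht : t = 1 ∨ t = -1) :
    s * t = 1 ∨ s * t = -1 := by rcases hs with rfl | rfl <;> rcases ht with rfl | rfl <;> norm_num

lemma comb2_ne_zero {i j : Fin n} {a b : ℝ} (hij : i ≠ j) (ha : a ≠ 0) :
    comb2 n i j a b ≠ 0 := by
  refine ne_of_coord i ?_
  rw [comb2_apply, zero_apply']
  simp [hij, ha]

lemma range_pair (a b : EuclideanSpace ℝ (Fin n)) : Set.range ![a, b] = {a, b} := by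
  simp [Matrix.range_cons, Matrix.range_empty, Set.pair_comm]

lemma finrank_span_pair_eq_two {a b : EuclideanSpace ℝ (Fin n)}
    (h : LinearIndependent ℝ ![a, b]) :
    Module.finrank ℝ (Submodule.span ℝ {a, b}) = 2 := by
  have h2 := finrank_span_eq_card h
  rw [range_pair] at h2
  simpa using h2

lemma li_pair {a b : EuclideanSpace ℝ (Fin n)} (ha : a ≠ 0)
    (hb : ∀ x : ℝ, b ≠ x • a) : LinearIndependent ℝ ![a, b] := by
  rw [LinearIndependent.pair_iff]
  intro x y hxy
  rcases eq_or_ne y 0 with rfl | hy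
  · refine ⟨?_, rfl⟩
    rw [zero_smul, add_zero, smul_eq_zero] at hxy
    tauto
  · exfalso
    apply hb (-x/y)
    have h1 : y • b = (-x) • a := by
      rw [neg_smul]
      exact eq_neg_of_add_eq_zero_right hxy
    have : b = y⁻¹ • ((-x) • a) := by rw [← h1, smul_smul, inv_mul_cancel₀ hy, one_smul]
    rw [this, smul_smul]
    ring_nf


lemma croots_short {i j : Fin n} {a b : ℝ} (hij : i ≠ j) (ha : a = 1 ∨ a = -1)
    (hb : b = 1 ∨ b = -1) : comb2 n i j a b ∈ Croots n :=
  ⟨comb2_ne_zero hij (unit_ne_zero ha), i, j, a, b, ha, hb, rfl⟩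

lemma smul_stdVec_ne_zero {i : Fin n} {d : ℝ} (hd : d ≠ 0) :
    d • stdVec n i ≠ (0 : EuclideanSpace ℝ (Fin n)) := by
  refine ne_of_coord i ?_
  rw [smul_apply', stdVec_apply, zero_apply']
  simp [hd]

lemma croots_long {i : Fin n} {d : ℝ} (hd : d = 2 ∨ d = -2) :
    d • stdVec n i ∈ Croots n := by
  rcases hd with rfl | rfl
  · exact ⟨smul_stdVec_ne_zero (by norm_num), i, i, 1, 1, Or.inl rfl, Or.inl rfl, by module⟩
  · exact ⟨smul_stdVec_ne_zero (by norm_num), i, i, -1, -1, Or.inr rfl, Or.inr rfl, by module⟩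

lemma long_apply (i l : Fin n) (d : ℝ) : (d • stdVec n i) l = if l = i then d else 0 := by
  rw [smul_apply', stdVec_apply]
  split <;> simp

lemma root_struct {v : EuclideanSpace ℝ (Fin n)} (hv : v ∈ Croots n) :
    (∃ (p : Fin n) (d : ℝ), (d = 2 ∨ d = -2) ∧ v = d • stdVec n p) ∨
    (∃ (p q : Fin n) (c d : ℝ), p ≠ q ∧ (c = 1 ∨ c = -1) ∧ (d = 1 ∨ d = -1) ∧
      v = comb2 n p q c d) := by
  obtain ⟨hne, i, j, s, t, hs, ht, hveq⟩ := hv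
  rcases eq_or_ne i j with rfl | hij
  · left
    refine ⟨i, s + t, ?_, ?_⟩
    · rcases hs with rfl | rfl <;> rcases ht with rfl | rfl <;> norm_num
      all_goals (exfalso; apply hne; rw [hveq]; module)
    · rw [hveq]; module
  · right; exact ⟨i, j, s, t, hij, hs, ht, hveq⟩

/-- A root proportional to a short root is `±` that root. -/
lemma scal_short {i j : Fin n} {s t x : ℝ} {v : EuclideanSpace ℝ (Fin n)}
    (hij : i ≠ j) (hs : s = 1 ∨ s = -1) (ht : t = 1 ∨ t = -1)
    (hv : v ∈ Croots n) (hx : v = x • comb2 n i j s t) :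
    v = comb2 n i j s t ∨ v = -comb2 n i j s t := by
  have Hl : ∀ l, v l = x * comb2 n i j s t l := fun l => by rw [hx, smul_apply']
  rcases root_struct hv with ⟨p, d, hd, hveq⟩ | ⟨p, q, c, d, hpq, hc, hd, hveq⟩
  · exfalso
    have hxne : x ≠ 0 := by
      rintro rfl
      apply hv.1
      rw [hx, zero_smul]
    have hpi : p = i := by
      by_contra hpi
      have := Hl i
      rw [hveq, long_apply, comb2_apply] at this
      simp [hij, Ne.symm hpi, unit_ne_zero hs, hxne] at this
    have hpj : p = j := by
      by_contra hpj
      have := Hl j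
      rw [hveq, long_apply, comb2_apply] at this
      simp [Ne.symm hij, Ne.symm hpj, unit_ne_zero ht, hxne] at this
    exact hij (hpi ▸ hpj)
  · -- short root
    have hpmem : p = i ∨ p = j := by
      by_contra hp
      push_neg at hp
      have := Hl p
      rw [hveq, comb2_apply, comb2_apply] at this
      simp [hpq, hp.1, hp.2, unit_ne_zero hc] at this
    have hqmem : q = i ∨ q = j := by
      by_contra hq
      push_neg at hq
      have := Hl q
      rw [hveq, comb2_apply, comb2_apply] at this
      simp [Ne.symm hpq, hq.1, hq.2, unit_ne_zero hd] at this
    have hxval : x = 1 ∨ x = -1 := by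
      rcases hpmem with rfl | rfl
      · have := Hl p
        rw [hveq, comb2_apply, comb2_apply] at this
        simp [hpq, hij] at this
        rcases hc with rfl | rfl <;> rcases hs with rfl | rfl <;>
          [left; right; right; left] <;> linarith
      · have := Hl p
        rw [hveq, comb2_apply, comb2_apply] at this
        simp [hpq, Ne.symm hij] at this
        rcases hc with rfl | rfl <;> rcases ht with rfl | rfl <;>
          [left; right; right; left] <;> linarith
    rcases hxval with rfl | rfl
    · left; rw [hx, one_smul]
    · right; rw [hx]; module


lemma unit_of_mul_unit {x s c : ℝ} (hs : s = 1 ∨ s = -1) (hc : c = 1 ∨ c = -1)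
    (h : x * s = c) : x = 1 ∨ x = -1 := by
  rcases hs with rfl | rfl <;> rcases hc with rfl | rfl <;> [left; right; right; left] <;> linarith

lemma comb3_inj {i j k : Fin n} (hij : i ≠ j) (hik : i ≠ k) (hjk : j ≠ k)
    {a b c a' b' c' : ℝ} :
    comb3 n i j k a b c = comb3 n i j k a' b' c' ↔ a = a' ∧ b = b' ∧ c = c' := by
  constructor
  · intro h
    have Hi : comb3 n i j k a b c i = comb3 n i j k a' b' c' i := by rw [h]
    have Hj : comb3 n i j k a b c j = comb3 n i j k a' b' c' j := by rw [h]
    have Hk : comb3 n i j k a b c k = comb3 n i j k a' b' c' k := by rw [h]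
    rw [comb3_apply, comb3_apply] at Hi Hj Hk
    simp [hij, hik, hjk, Ne.symm hij, Ne.symm hik, Ne.symm hjk] at Hi Hj Hk
    exact ⟨Hi, Hj, Hk⟩
  · rintro ⟨rfl, rfl, rfl⟩; rfl

lemma comb3_left {i j k : Fin n} (a b : ℝ) : comb3 n i j k a b 0 = comb2 n i j a b := by
  simp only [comb2, comb3]; module

lemma comb3_mid {i j k : Fin n} (a c : ℝ) : comb3 n i j k a 0 c = comb2 n i k a c := by
  simp only [comb2, comb3]; module

lemma comb3_right {i j k : Fin n} (b c : ℝ) : comb3 n i j k 0 b c = comb2 n j k b c := by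
  simp only [comb2, comb3]; module

/-- The six roots of an `A₂`-plane. -/
def sixSet (n : ℕ) (i j k : Fin n) (s t ε : ℝ) : Set (EuclideanSpace ℝ (Fin n)) :=
  {comb3 n i j k s t 0, comb3 n i j k (-s) (-t) 0, comb3 n i j k 0 t ε,
   comb3 n i j k 0 (-t) (-ε), comb3 n i j k s 0 (-ε), comb3 n i j k (-s) 0 ε}

lemma six_ncard {i j k : Fin n} (hij : i ≠ j) (hik : i ≠ k) (hjk : j ≠ k)
    {s t ε : ℝ} (hs : s = 1 ∨ s = -1) (ht : t = 1 ∨ t = -1) (hε : ε = 1 ∨ ε = -1) :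
    (sixSet n i j k s t ε).ncard = 6 := by
  unfold sixSet
  rcases hs with rfl | rfl <;> rcases ht with rfl | rfl <;> rcases hε with rfl | rfl <;>
  · rw [Set.ncard_insert_of_notMem (by norm_num [comb3_inj hij hik hjk]) (Set.toFinite _),
      Set.ncard_insert_of_notMem (by norm_num [comb3_inj hij hik hjk]) (Set.toFinite _),
      Set.ncard_insert_of_notMem (by norm_num [comb3_inj hij hik hjk]) (Set.toFinite _),
      Set.ncard_insert_of_notMem (by norm_num [comb3_inj hij hik hjk]) (Set.toFinite _),
      Set.ncard_insert_of_notMem (by norm_num [comb3_inj hij hik hjk]) (Set.toFinite _),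
      Set.ncard_singleton]

lemma six_inter {i j k : Fin n} (hij : i ≠ j) (hik : i ≠ k) (hjk : j ≠ k)
    {s t ε : ℝ} (hs : s = 1 ∨ s = -1) (ht : t = 1 ∨ t = -1) (hε : ε = 1 ∨ ε = -1) :
    Croots n ∩ ↑(Submodule.span ℝ {comb2 n i j s t, comb2 n j k t ε}) =
      sixSet n i j k s t ε := by
  have ht0 := unit_ne_zero ht
  have hε0 := unit_ne_zero hε
  have hs0 := unit_ne_zero hs
  apply Set.eq_of_subset_of_subset
  · rintro v ⟨hv, hvW⟩
    rw [SetLike.mem_coe, Submodule.mem_span_pair] at hvW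
    obtain ⟨x, y, hxy⟩ := hvW
    have Hl : ∀ l, x * ((if l = i then s else 0) + (if l = j then t else 0)) +
        y * ((if l = j then t else 0) + (if l = k then ε else 0)) = v l := fun l => by
      rw [← hxy, pair_comb_apply, comb2_apply, comb2_apply]
    simp only [sixSet, Set.mem_insert_iff, Set.mem_singleton_iff]
    rcases root_struct hv with ⟨p, d, hd, hveq⟩ | ⟨p, q, c, d, hpq, hc, hd, hveq⟩
    · exfalso
      have hd0 : d ≠ 0 := by rcases hd with rfl | rfl <;> norm_num
      have hpmem : p = i ∨ p = j ∨ p = k := by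
        by_contra hp
        push_neg at hp
        have := Hl p
        rw [hveq, long_apply] at this
        simp [hp.1, hp.2.1, hp.2.2] at this
        exact hd0 this.symm
      rcases hpmem with rfl | rfl | rfl
      · have hy : y = 0 := by
          have := Hl k
          rw [hveq, long_apply] at this
          simpa [hij, hik, hjk, Ne.symm hij, Ne.symm hik, Ne.symm hjk, mul_eq_zero, hε0]
            using this
        have hx : x = 0 := by
          have := Hl j
          rw [hveq, long_apply] at this
          simpa [hij, hik, hjk, Ne.symm hij, Ne.symm hik, Ne.symm hjk, hy, mul_eq_zero, ht0]
            using this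
        have := Hl p
        rw [hveq, long_apply] at this
        simp [hij, hik, hx, hy] at this
        exact hd0 (by linarith)
      · have hy : y = 0 := by
          have := Hl k
          rw [hveq, long_apply] at this
          simpa [hij, hik, hjk, Ne.symm hij, Ne.symm hik, Ne.symm hjk, mul_eq_zero, hε0]
            using this
        have hx : x = 0 := by
          have := Hl i
          rw [hveq, long_apply] at this
          simpa [hij, hik, hjk, Ne.symm hij, Ne.symm hik, Ne.symm hjk, mul_eq_zero, hs0]
            using this
        have := Hl p
        rw [hveq, long_apply] at this
        simp [Ne.symm hij, hjk, hx, hy] at this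
        exact hd0 (by linarith)
      · have hx : x = 0 := by
          have := Hl i
          rw [hveq, long_apply] at this
          simpa [hij, hik, hjk, Ne.symm hij, Ne.symm hik, Ne.symm hjk, mul_eq_zero, hs0]
            using this
        have hy : y = 0 := by
          have := Hl j
          rw [hveq, long_apply] at this
          simpa [hij, hik, hjk, Ne.symm hij, Ne.symm hik, Ne.symm hjk, hx, mul_eq_zero, ht0]
            using this
        have := Hl p
        rw [hveq, long_apply] at this
        simp [Ne.symm hik, Ne.symm hjk, hx, hy] at this
        exact hd0 (by linarith)
    · -- short root
      have hc0 := unit_ne_zero hc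
      have hd0 := unit_ne_zero hd
      have hpmem : p = i ∨ p = j ∨ p = k := by
        by_contra hp
        push_neg at hp
        have := Hl p
        rw [hveq, comb2_apply] at this
        simp [hp.1, hp.2.1, hp.2.2, hpq] at this
        exact hc0 this.symm
      have hqmem : q = i ∨ q = j ∨ q = k := by
        by_contra hq
        push_neg at hq
        have := Hl q
        rw [hveq, comb2_apply] at this
        simp [hq.1, hq.2.1, hq.2.2, Ne.symm hpq] at this
        exact hd0 this.symm
      rcases hpmem with rfl | rfl | rfl <;> rcases hqmem with rfl | rfl | rfl
      · exact absurd rfl hpq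
      · -- (p,q) = (i,j)
        have hy : y = 0 := by
          have := Hl k
          rw [hveq, comb2_apply] at this
          simpa [hij, hik, hjk, Ne.symm hij, Ne.symm hik, Ne.symm hjk, mul_eq_zero, hε0]
            using this
        have hxs : x * s = c := by
          have := Hl p
          rw [hveq, comb2_apply] at this
          simpa [hij, hik, hjk, Ne.symm hij, Ne.symm hik, Ne.symm hjk, hy] using this
        rcases unit_of_mul_unit hs hc hxs with rfl | rfl
        · subst hy
          refine Or.inl ?_
          rw [← hxy]; simp only [comb2, comb3]; module
        · subst hy
          refine Or.inr (Or.inl ?_)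
          rw [← hxy]; simp only [comb2, comb3]; module
      · -- (p,q) = (i,k)
        have hxyt : x * t + y * t = 0 := by
          have := Hl j
          rw [hveq, comb2_apply] at this
          simpa [hij, hik, hjk, Ne.symm hij, Ne.symm hik, Ne.symm hjk] using this
        have hy : y = -x := by
          have h0 : (x + y) * t = 0 := by linear_combination hxyt
          rcases mul_eq_zero.1 h0 with h | h
          · linarith
          · exact absurd h ht0
        have hxs : x * s = c := by
          have := Hl p
          rw [hveq, comb2_apply] at this
          simpa [hij, hik, hjk, Ne.symm hij, Ne.symm hik, Ne.symm hjk] using this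
        rcases unit_of_mul_unit hs hc hxs with rfl | rfl
        · rw [show y = -1 by linarith] at hxy
          refine Or.inr (Or.inr (Or.inr (Or.inr (Or.inl ?_))))
          rw [← hxy]; simp only [comb2, comb3]; module
        · rw [show y = 1 by linarith] at hxy
          refine Or.inr (Or.inr (Or.inr (Or.inr (Or.inr ?_))))
          rw [← hxy]; simp only [comb2, comb3]; module
      · -- (p,q) = (j,i)
        have hy : y = 0 := by
          have := Hl k
          rw [hveq, comb2_apply] at this
          simpa [hij, hik, hjk, Ne.symm hij, Ne.symm hik, Ne.symm hjk, mul_eq_zero, hε0]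
            using this
        have hxs : x * s = d := by
          have := Hl q
          rw [hveq, comb2_apply] at this
          simpa [hij, hik, hjk, Ne.symm hij, Ne.symm hik, Ne.symm hjk, hy] using this
        rcases unit_of_mul_unit hs hd hxs with rfl | rfl
        · subst hy
          refine Or.inl ?_
          rw [← hxy]; simp only [comb2, comb3]; module
        · subst hy
          refine Or.inr (Or.inl ?_)
          rw [← hxy]; simp only [comb2, comb3]; module
      · exact absurd rfl hpq
      · -- (p,q) = (j,k)
        have hx : x = 0 := by
          have := Hl i
          rw [hveq, comb2_apply] at this
          simpa [hij, hik, hjk, Ne.symm hij, Ne.symm hik, Ne.symm hjk, mul_eq_zero, hs0]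
            using this
        have hyε : y * ε = d := by
          have := Hl q
          rw [hveq, comb2_apply] at this
          simpa [hij, hik, hjk, Ne.symm hij, Ne.symm hik, Ne.symm hjk, hx] using this
        rcases unit_of_mul_unit hε hd hyε with rfl | rfl
        · subst hx
          refine Or.inr (Or.inr (Or.inl ?_))
          rw [← hxy]; simp only [comb2, comb3]; module
        · subst hx
          refine Or.inr (Or.inr (Or.inr (Or.inl ?_)))
          rw [← hxy]; simp only [comb2, comb3]; module
      · -- (p,q) = (k,i)
        have hxyt : x * t + y * t = 0 := by
          have := Hl j
          rw [hveq, comb2_apply] at this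
          simpa [hij, hik, hjk, Ne.symm hij, Ne.symm hik, Ne.symm hjk] using this
        have hy : y = -x := by
          have h0 : (x + y) * t = 0 := by linear_combination hxyt
          rcases mul_eq_zero.1 h0 with h | h
          · linarith
          · exact absurd h ht0
        have hxs : x * s = d := by
          have := Hl q
          rw [hveq, comb2_apply] at this
          simpa [hij, hik, hjk, Ne.symm hij, Ne.symm hik, Ne.symm hjk] using this
        rcases unit_of_mul_unit hs hd hxs with rfl | rfl
        · rw [show y = -1 by linarith] at hxy
          refine Or.inr (Or.inr (Or.inr (Or.inr (Or.inl ?_))))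
          rw [← hxy]; simp only [comb2, comb3]; module
        · rw [show y = 1 by linarith] at hxy
          refine Or.inr (Or.inr (Or.inr (Or.inr (Or.inr ?_))))
          rw [← hxy]; simp only [comb2, comb3]; module
      · -- (p,q) = (k,j)
        have hx : x = 0 := by
          have := Hl i
          rw [hveq, comb2_apply] at this
          simpa [hij, hik, hjk, Ne.symm hij, Ne.symm hik, Ne.symm hjk, mul_eq_zero, hs0]
            using this
        have hyε : y * ε = c := by
          have := Hl p
          rw [hveq, comb2_apply] at this
          simpa [hij, hik, hjk, Ne.symm hij, Ne.symm hik, Ne.symm hjk, hx] using this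
        rcases unit_of_mul_unit hε hc hyε with rfl | rfl
        · subst hx
          refine Or.inr (Or.inr (Or.inl ?_))
          rw [← hxy]; simp only [comb2, comb3]; module
        · subst hx
          refine Or.inr (Or.inr (Or.inr (Or.inl ?_)))
          rw [← hxy]; simp only [comb2, comb3]; module
      · exact absurd rfl hpq
  · intro v hv
    simp only [sixSet, Set.mem_insert_iff, Set.mem_singleton_iff] at hv
    rcases hv with rfl | rfl | rfl | rfl | rfl | rfl
    · refine ⟨by rw [comb3_left]; exact croots_short hij hs ht, ?_⟩
      rw [SetLike.mem_coe, Submodule.mem_span_pair]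
      exact ⟨1, 0, by simp only [comb2, comb3]; module⟩
    · refine ⟨by rw [comb3_left]; exact croots_short hij (unit_neg hs) (unit_neg ht), ?_⟩
      rw [SetLike.mem_coe, Submodule.mem_span_pair]
      exact ⟨-1, 0, by simp only [comb2, comb3]; module⟩
    · refine ⟨by rw [comb3_right]; exact croots_short hjk ht hε, ?_⟩
      rw [SetLike.mem_coe, Submodule.mem_span_pair]
      exact ⟨0, 1, by simp only [comb2, comb3]; module⟩
    · refine ⟨by rw [comb3_right]; exact croots_short hjk (unit_neg ht) (unit_neg hε), ?_⟩
      rw [SetLike.mem_coe, Submodule.mem_span_pair]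
      exact ⟨0, -1, by simp only [comb2, comb3]; module⟩
    · refine ⟨by rw [comb3_mid]; exact croots_short hik hs (unit_neg hε), ?_⟩
      rw [SetLike.mem_coe, Submodule.mem_span_pair]
      exact ⟨1, -1, by simp only [comb2, comb3]; module⟩
    · refine ⟨by rw [comb3_mid]; exact croots_short hik (unit_neg hs) hε, ?_⟩
      rw [SetLike.mem_coe, Submodule.mem_span_pair]
      exact ⟨-1, 1, by simp only [comb2, comb3]; module⟩

lemma comb2_inj {i j : Fin n} (hij : i ≠ j) {a b a' b' : ℝ} :
    comb2 n i j a b = comb2 n i j a' b' ↔ a = a' ∧ b = b' := by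
  constructor
  · intro h
    have Hi : comb2 n i j a b i = comb2 n i j a' b' i := by rw [h]
    have Hj : comb2 n i j a b j = comb2 n i j a' b' j := by rw [h]
    rw [comb2_apply, comb2_apply] at Hi Hj
    simp [hij, Ne.symm hij] at Hi Hj
    exact ⟨Hi, Hj⟩
  · rintro ⟨rfl, rfl⟩; rfl

/-- The eight roots of a `C₂`-plane. -/
def eightSet (n : ℕ) (i j : Fin n) : Set (EuclideanSpace ℝ (Fin n)) :=
  {comb2 n i j 1 1, comb2 n i j 1 (-1), comb2 n i j (-1) 1, comb2 n i j (-1) (-1),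
   comb2 n i j 2 0, comb2 n i j (-2) 0, comb2 n i j 0 2, comb2 n i j 0 (-2)}

lemma eight_ncard {i j : Fin n} (hij : i ≠ j) : (eightSet n i j).ncard = 8 := by
  unfold eightSet
  rw [Set.ncard_insert_of_notMem (by norm_num [comb2_inj hij]) (Set.toFinite _),
    Set.ncard_insert_of_notMem (by norm_num [comb2_inj hij]) (Set.toFinite _),
    Set.ncard_insert_of_notMem (by norm_num [comb2_inj hij]) (Set.toFinite _),
    Set.ncard_insert_of_notMem (by norm_num [comb2_inj hij]) (Set.toFinite _),
    Set.ncard_insert_of_notMem (by norm_num [comb2_inj hij]) (Set.toFinite _),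
    Set.ncard_insert_of_notMem (by norm_num [comb2_inj hij]) (Set.toFinite _),
    Set.ncard_insert_of_notMem (by norm_num [comb2_inj hij]) (Set.toFinite _),
    Set.ncard_singleton]

lemma eight_inter {i j : Fin n} (hij : i ≠ j) :
    Croots n ∩ ↑(Submodule.span ℝ {stdVec n i, stdVec n j}) = eightSet n i j := by
  apply Set.eq_of_subset_of_subset
  · rintro v ⟨hv, hvW⟩
    rw [SetLike.mem_coe, Submodule.mem_span_pair] at hvW
    obtain ⟨x, y, hxy⟩ := hvW
    have Hl : ∀ l, x * (if l = i then 1 else 0) + y * (if l = j then 1 else 0) = v l :=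
      fun l => by rw [← hxy, pair_comb_apply, stdVec_apply, stdVec_apply]
    simp only [eightSet, Set.mem_insert_iff, Set.mem_singleton_iff]
    rcases root_struct hv with ⟨p, d, hd, hveq⟩ | ⟨p, q, c, d, hpq, hc, hd, hveq⟩
    · have hd0 : d ≠ 0 := by rcases hd with rfl | rfl <;> norm_num
      have hpmem : p = i ∨ p = j := by
        by_contra hp
        push_neg at hp
        have := Hl p
        rw [hveq, long_apply] at this
        simp [hp.1, hp.2] at this
        exact hd0 this.symm
      rcases hpmem with rfl | rfl
      · have hy : y = 0 := by
          have := Hl j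
          rw [hveq, long_apply] at this
          simpa [hij, Ne.symm hij] using this
        have hx : x = d := by
          have := Hl p
          rw [hveq, long_apply] at this
          simpa [hij, hy] using this
        subst hy; subst hx
        rcases hd with rfl | rfl
        · refine Or.inr (Or.inr (Or.inr (Or.inr (Or.inl ?_))))
          rw [← hxy]; simp only [comb2]; try module
        · refine Or.inr (Or.inr (Or.inr (Or.inr (Or.inr (Or.inl ?_)))))
          rw [← hxy]; simp only [comb2]; try module
      · have hx : x = 0 := by
          have := Hl i
          rw [hveq, long_apply] at this
          simpa [hij, Ne.symm hij] using this
        have hy : y = d := by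
          have := Hl p
          rw [hveq, long_apply] at this
          simpa [Ne.symm hij, hx] using this
        subst hx; subst hy
        rcases hd with rfl | rfl
        · refine Or.inr (Or.inr (Or.inr (Or.inr (Or.inr (Or.inr (Or.inl ?_))))))
          rw [← hxy]; simp only [comb2]; try module
        · refine Or.inr (Or.inr (Or.inr (Or.inr (Or.inr (Or.inr (Or.inr ?_))))))
          rw [← hxy]; simp only [comb2]; try module
    · have hc0 := unit_ne_zero hc
      have hd0 := unit_ne_zero hd
      have hpmem : p = i ∨ p = j := by
        by_contra hp
        push_neg at hp
        have := Hl p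
        rw [hveq, comb2_apply] at this
        simp [hp.1, hp.2, hpq] at this
        exact hc0 this.symm
      have hqmem : q = i ∨ q = j := by
        by_contra hq
        push_neg at hq
        have := Hl q
        rw [hveq, comb2_apply] at this
        simp [hq.1, hq.2, Ne.symm hpq] at this
        exact hd0 this.symm
      rcases hpmem with rfl | rfl <;> rcases hqmem with rfl | rfl
      · exact absurd rfl hpq
      · have hx : x = c := by
          have := Hl p
          rw [hveq, comb2_apply] at this
          simpa [hij, Ne.symm hij] using this
        have hy : y = d := by
          have := Hl q
          rw [hveq, comb2_apply] at this
          simpa [hij, Ne.symm hij] using this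
        subst hx; subst hy
        rcases hc with rfl | rfl <;> rcases hd with rfl | rfl
        · exact Or.inl (by rw [← hxy]; simp only [comb2]; try module)
        · exact Or.inr (Or.inl (by rw [← hxy]; simp only [comb2]; try module))
        · exact Or.inr (Or.inr (Or.inl (by rw [← hxy]; simp only [comb2]; try module)))
        · exact Or.inr (Or.inr (Or.inr (Or.inl (by rw [← hxy]; simp only [comb2]; try module))))
      · have hx : x = d := by
          have := Hl q
          rw [hveq, comb2_apply] at this
          simpa [hij, Ne.symm hij, hpq] using this
        have hy : y = c := by
          have := Hl p
          rw [hveq, comb2_apply] at this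
          simpa [hij, Ne.symm hij, hpq, Ne.symm hpq] using this
        subst hx; subst hy
        rcases hc with rfl | rfl <;> rcases hd with rfl | rfl
        · exact Or.inl (by rw [← hxy]; simp only [comb2]; try module)
        · exact Or.inr (Or.inr (Or.inl (by rw [← hxy]; simp only [comb2]; try module)))
        · exact Or.inr (Or.inl (by rw [← hxy]; simp only [comb2]; try module))
        · exact Or.inr (Or.inr (Or.inr (Or.inl (by rw [← hxy]; simp only [comb2]; try module))))
      · exact absurd rfl hpq
  · intro v hv
    simp only [eightSet, Set.mem_insert_iff, Set.mem_singleton_iff] at hv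
    have hl2 : comb2 n i j 2 0 = (2:ℝ) • stdVec n i := by simp only [comb2]; try module
    have hl2' : comb2 n i j (-2) 0 = (-2:ℝ) • stdVec n i := by simp only [comb2]; try module
    have hl2j : comb2 n i j 0 2 = (2:ℝ) • stdVec n j := by simp only [comb2]; try module
    have hl2j' : comb2 n i j 0 (-2) = (-2:ℝ) • stdVec n j := by simp only [comb2]; try module
    rcases hv with rfl | rfl | rfl | rfl | rfl | rfl | rfl | rfl
    · exact ⟨croots_short hij (Or.inl rfl) (Or.inl rfl), by
        rw [SetLike.mem_coe, Submodule.mem_span_pair]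
        exact ⟨1, 1, by simp only [comb2]; try module⟩⟩
    · exact ⟨croots_short hij (Or.inl rfl) (Or.inr rfl), by
        rw [SetLike.mem_coe, Submodule.mem_span_pair]
        exact ⟨1, -1, by simp only [comb2]; try module⟩⟩
    · exact ⟨croots_short hij (Or.inr rfl) (Or.inl rfl), by
        rw [SetLike.mem_coe, Submodule.mem_span_pair]
        exact ⟨-1, 1, by simp only [comb2]; try module⟩⟩
    · exact ⟨croots_short hij (Or.inr rfl) (Or.inr rfl), by
        rw [SetLike.mem_coe, Submodule.mem_span_pair]
        exact ⟨-1, -1, by simp only [comb2]; try module⟩⟩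
    · exact ⟨by rw [hl2]; exact croots_long (Or.inl rfl), by
        rw [SetLike.mem_coe, Submodule.mem_span_pair]
        exact ⟨2, 0, by simp only [comb2]; try module⟩⟩
    · exact ⟨by rw [hl2']; exact croots_long (Or.inr rfl), by
        rw [SetLike.mem_coe, Submodule.mem_span_pair]
        exact ⟨-2, 0, by simp only [comb2]; try module⟩⟩
    · exact ⟨by rw [hl2j]; exact croots_long (Or.inl rfl), by
        rw [SetLike.mem_coe, Submodule.mem_span_pair]
        exact ⟨0, 2, by simp only [comb2]; try module⟩⟩
    · exact ⟨by rw [hl2j']; exact croots_long (Or.inr rfl), by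
        rw [SetLike.mem_coe, Submodule.mem_span_pair]
        exact ⟨0, -2, by simp only [comb2]; try module⟩⟩

lemma unit2_ne_zero {d : ℝ} (hd : d = 2 ∨ d = -2) : d ≠ 0 := by
  rcases hd with rfl | rfl <;> norm_num

lemma exists_ne_zero_coord {v : EuclideanSpace ℝ (Fin n)} (h : v ≠ 0) : ∃ l, v l ≠ 0 := by
  by_contra hc
  push_neg at hc
  exact h (by ext l; simpa using hc l)

lemma scal_root {β v : EuclideanSpace ℝ (Fin n)} {y : ℝ} (hβ : β ∈ Croots n)
    (hv : v ∈ Croots n) (h : v = y • β) : v = β ∨ v = -β := by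
  rcases root_struct hβ with ⟨p, d, hd, rfl⟩ | ⟨p, q, c, d, hpq, hc, hd, rfl⟩
  · have Hl : ∀ l, v l = y * (if l = p then d else 0) := fun l => by
      rw [h, smul_apply', long_apply]
    rcases root_struct hv with ⟨p', d', hd', hveq⟩ | ⟨p', q', c', d', hpq', hc', hd', hveq⟩
    · have hp' : p' = p := by
        by_contra hne
        have := Hl p'
        rw [hveq, long_apply] at this
        simp [hne] at this
        exact unit2_ne_zero hd' this
      subst hp'
      have hyd : d' = y * d := by
        have := Hl p'
        rw [hveq, long_apply] at this
        simpa using this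
      have hy : y = 1 ∨ y = -1 := by
        rcases hd with rfl | rfl <;> rcases hd' with rfl | rfl <;>
          [left; right; right; left] <;> linarith
      rcases hy with rfl | rfl
      · left; rw [h, one_smul]
      · right; rw [h]; module
    · exfalso
      have h1 : p' = p := by
        by_contra hne
        have := Hl p'
        rw [hveq, comb2_apply] at this
        simp [hpq', hne] at this
        exact unit_ne_zero hc' this
      have h2 : q' = p := by
        by_contra hne
        have := Hl q'
        rw [hveq, comb2_apply] at this
        simp [Ne.symm hpq', hne] at this
        exact unit_ne_zero hd' this
      exact hpq' (h1.trans h2.symm)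
  · exact scal_short hpq hc hd hv h

lemma four_subset {i j : Fin n} (hij : i ≠ j) {s t : ℝ}
    (hs : s = 1 ∨ s = -1) (ht : t = 1 ∨ t = -1) {β : EuclideanSpace ℝ (Fin n)}
    (hβ : β ∈ Croots n) (hβi : β i = 0) (hβj : β j = 0) :
    Croots n ∩ ↑(Submodule.span ℝ {comb2 n i j s t, β}) ⊆
      {comb2 n i j s t, -comb2 n i j s t, β, -β} := by
  rintro v ⟨hv, hvW⟩
  rw [SetLike.mem_coe, Submodule.mem_span_pair] at hvW
  obtain ⟨x, y, hxy⟩ := hvW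
  obtain ⟨k, hk⟩ := exists_ne_zero_coord hβ.1
  have hki : k ≠ i := by rintro rfl; exact hk hβi
  have hkj : k ≠ j := by rintro rfl; exact hk hβj
  simp only [Set.mem_insert_iff, Set.mem_singleton_iff]
  by_cases hx : x = 0
  · subst hx
    rw [zero_smul, zero_add] at hxy
    rcases scal_root hβ hv hxy.symm with h | h
    · exact Or.inr (Or.inr (Or.inl h))
    · exact Or.inr (Or.inr (Or.inr h))
  by_cases hy : y = 0
  · subst hy
    rw [zero_smul, add_zero] at hxy
    rcases scal_short hij hs ht hv hxy.symm with h | h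
    · exact Or.inl h
    · exact Or.inr (Or.inl h)
  exfalso
  have Hi : v i ≠ 0 := by
    rw [← hxy, pair_comb_apply, comb2_apply, hβi]
    simp [hij]
    exact ⟨hx, unit_ne_zero hs⟩
  have Hj : v j ≠ 0 := by
    rw [← hxy, pair_comb_apply, comb2_apply, hβj]
    simp [Ne.symm hij]
    exact ⟨hx, unit_ne_zero ht⟩
  have Hk : v k ≠ 0 := by
    rw [← hxy, pair_comb_apply, comb2_apply]
    simp [hki, hkj]
    exact ⟨hy, hk⟩
  rcases root_struct hv with ⟨p, d, hd, hveq⟩ | ⟨p, q, c, d, hpq, hc, hd, hveq⟩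
  · have hip : i = p := by
      by_contra hne
      apply Hi
      rw [hveq, long_apply, if_neg hne]
    have hjp : j = p := by
      by_contra hne
      apply Hj
      rw [hveq, long_apply, if_neg hne]
    exact hij (hip.trans hjp.symm)
  · have mem : ∀ l, v l ≠ 0 → l = p ∨ l = q := by
      intro l hl
      by_contra hc2
      push_neg at hc2
      apply hl
      rw [hveq, comb2_apply, if_neg hc2.1, if_neg hc2.2, add_zero]
    rcases mem i Hi with rfl | rfl
    · rcases mem j Hj with h2 | rfl
      · exact hij h2.symm
      · rcases mem k Hk with h3 | h3
        · exact hki h3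
        · exact hkj h3
    · rcases mem j Hj with rfl | h2
      · rcases mem k Hk with h3 | h3
        · exact hkj h3
        · exact hki h3
      · exact hij h2.symm

lemma ncard_le_four (a b c d : EuclideanSpace ℝ (Fin n)) :
    ({a, b, c, d} : Set (EuclideanSpace ℝ (Fin n))).ncard ≤ 4 := by
  refine le_trans (Set.ncard_insert_le _ _) ?_
  refine le_trans (Nat.add_le_add_right (Set.ncard_insert_le _ _) 1) ?_
  refine le_trans (Nat.add_le_add_right (Nat.add_le_add_right (Set.ncard_insert_le _ _) 1) 1) ?_
  simp [Set.ncard_singleton]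

lemma stdVec_ne_zero (i : Fin n) : stdVec n i ≠ 0 := by
  refine ne_of_coord i ?_
  rw [stdVec_apply, zero_apply']
  simp

lemma li_std {i j : Fin n} (hij : i ≠ j) : LinearIndependent ℝ ![stdVec n i, stdVec n j] := by
  refine li_pair (stdVec_ne_zero i) fun x hx => ?_
  have : stdVec n j j = (x • stdVec n i) j := by rw [hx]
  rw [stdVec_apply, smul_apply', stdVec_apply] at this
  simp [Ne.symm hij] at this

lemma comb2_not_smul {i j p q : Fin n} {s t c d : ℝ} (hqi : q ≠ i) (hqj : q ≠ j)
    (hpq : p ≠ q) (hd0 : d ≠ 0) (x : ℝ) : comb2 n p q c d ≠ x • comb2 n i j s t := by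
  intro h
  have : comb2 n p q c d q = (x • comb2 n i j s t) q := by rw [h]
  rw [comb2_apply, smul_apply', comb2_apply] at this
  simp [Ne.symm hpq, hqi, hqj] at this
  exact hd0 this

lemma to_span8 {i j : Fin n} (hij : i ≠ j) {W : Submodule ℝ (EuclideanSpace ℝ (Fin n))}
    (hW2 : Module.finrank ℝ W = 2)
    (hle : W ≤ Submodule.span ℝ {stdVec n i, stdVec n j}) :
    W = Submodule.span ℝ {stdVec n i, stdVec n j} :=
  Submodule.eq_of_le_of_finrank_eq hle (by rw [hW2, finrank_span_pair_eq_two (li_std hij)])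

lemma classify {i j : Fin n} (hij : i ≠ j) {s t : ℝ}
    (hs : s = 1 ∨ s = -1) (ht : t = 1 ∨ t = -1)
    {W : Submodule ℝ (EuclideanSpace ℝ (Fin n))} (hW2 : Module.finrank ℝ W = 2)
    (hαW : comb2 n i j s t ∈ W) :
    W = Submodule.span ℝ {stdVec n i, stdVec n j} ∨
    (∃ k : Fin n, ∃ ε : ℝ, k ≠ i ∧ k ≠ j ∧ (ε = 1 ∨ ε = -1) ∧
      W = Submodule.span ℝ {comb2 n i j s t, comb2 n j k t ε}) ∨
    (Croots n ∩ (W : Set (EuclideanSpace ℝ (Fin n)))).ncard ≤ 4 := by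
  by_cases hex : ∃ β, β ∈ Croots n ∧ β ∈ W ∧ β ≠ comb2 n i j s t ∧ β ≠ -comb2 n i j s t
  swap
  · push_neg at hex
    refine Or.inr (Or.inr ?_)
    have hsub : Croots n ∩ (W : Set (EuclideanSpace ℝ (Fin n))) ⊆
        {comb2 n i j s t, -comb2 n i j s t, comb2 n i j s t, -comb2 n i j s t} := by
      rintro v ⟨hv, hvW⟩
      simp only [Set.mem_insert_iff, Set.mem_singleton_iff]
      by_contra hcon
      push_neg at hcon
      exact hcon.2.2.2 (hex v hv hvW hcon.1)
    exact le_trans (Set.ncard_le_ncard hsub (Set.toFinite _)) (ncard_le_four _ _ _ _)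
  obtain ⟨β, hβ, hβW, hβ1, hβ2⟩ := hex
  have hno : ∀ x : ℝ, β ≠ x • comb2 n i j s t := by
    intro x hx
    rcases scal_short hij hs ht hβ hx with h | h
    · exact hβ1 h
    · exact hβ2 h
  have li := li_pair (comb2_ne_zero hij (unit_ne_zero hs)) hno
  have hWeq : W = Submodule.span ℝ {comb2 n i j s t, β} := by
    refine (Submodule.eq_of_le_of_finrank_eq ?_ ?_).symm
    · rw [Submodule.span_le]
      rintro z hz
      simp only [Set.mem_insert_iff, Set.mem_singleton_iff] at hz
      rcases hz with rfl | rfl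
      · exact hαW
      · exact hβW
    · rw [finrank_span_pair_eq_two li, hW2]
  rcases root_struct hβ with ⟨p, d, hd, rfl⟩ | ⟨p, q, c, d, hpq, hc, hd, rfl⟩
  · -- long root
    by_cases hpi : p = i
    · subst p
      refine Or.inl (to_span8 hij hW2 ?_)
      rw [hWeq, Submodule.span_le]
      rintro z hz
      simp only [Set.mem_insert_iff, Set.mem_singleton_iff] at hz
      rcases hz with rfl | rfl
      · rw [SetLike.mem_coe, Submodule.mem_span_pair]
        exact ⟨s, t, by simp only [comb2]; try module⟩
      · rw [SetLike.mem_coe, Submodule.mem_span_pair]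
        exact ⟨d, 0, by module⟩
    by_cases hpj : p = j
    · subst p
      refine Or.inl (to_span8 hij hW2 ?_)
      rw [hWeq, Submodule.span_le]
      rintro z hz
      simp only [Set.mem_insert_iff, Set.mem_singleton_iff] at hz
      rcases hz with rfl | rfl
      · rw [SetLike.mem_coe, Submodule.mem_span_pair]
        exact ⟨s, t, by simp only [comb2]; try module⟩
      · rw [SetLike.mem_coe, Submodule.mem_span_pair]
        exact ⟨0, d, by module⟩
    · refine Or.inr (Or.inr ?_)
      rw [hWeq]
      refine le_trans (Set.ncard_le_ncard (four_subset hij hs ht hβ ?_ ?_) (Set.toFinite _))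
        (ncard_le_four _ _ _ _)
      · rw [long_apply, if_neg (fun h => hpi h.symm)]
      · rw [long_apply, if_neg (fun h => hpj h.symm)]
  · -- short root β = comb2 n p q c d
    by_cases hpi : p = i
    · subst p
      by_cases hqj : q = j
      · subst q
        refine Or.inl (to_span8 hij hW2 ?_)
        rw [hWeq, Submodule.span_le]
        rintro z hz
        simp only [Set.mem_insert_iff, Set.mem_singleton_iff] at hz
        rcases hz with rfl | rfl
        · rw [SetLike.mem_coe, Submodule.mem_span_pair]
          exact ⟨s, t, by simp only [comb2]; try module⟩
        · rw [SetLike.mem_coe, Submodule.mem_span_pair]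
          exact ⟨c, d, by simp only [comb2]; try module⟩
      · -- case A : p = i, q ∉ {i,j}
        have hqi : q ≠ i := Ne.symm hpq
        refine Or.inr (Or.inl ⟨q, -(c*s*d), hqi, hqj, unit_neg (unit_mul (unit_mul hc hs) hd), ?_⟩)
        have hBeq : comb2 n i q c d =
            (c*s) • comb2 n i j s t + (-(c*s)) • comb2 n j q t (-(c*s*d)) := by
          ext l
          rw [pair_comb_apply, comb2_apply, comb2_apply, comb2_apply]
          rcases hs with rfl | rfl <;> rcases hc with rfl | rfl <;> rcases hd with rfl | rfl <;>
            split_ifs <;> ring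
        rw [hWeq]
        refine Submodule.eq_of_le_of_finrank_eq ?_ ?_
        · rw [Submodule.span_le]
          rintro z hz
          simp only [Set.mem_insert_iff, Set.mem_singleton_iff] at hz
          rcases hz with rfl | rfl
          · rw [SetLike.mem_coe, Submodule.mem_span_pair]
            exact ⟨1, 0, by module⟩
          · rw [SetLike.mem_coe, Submodule.mem_span_pair]
            exact ⟨c*s, -(c*s), hBeq.symm⟩
        · rw [finrank_span_pair_eq_two li, finrank_span_pair_eq_two
            (li_pair (comb2_ne_zero hij (unit_ne_zero hs))
              (comb2_not_smul hqi hqj (Ne.symm hqj) (unit_ne_zero (unit_neg (unit_mul (unit_mul hc hs) hd)))))]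
    · by_cases hpj : p = j
      · subst p
        by_cases hqi : q = i
        · subst q
          refine Or.inl (to_span8 hij hW2 ?_)
          rw [hWeq, Submodule.span_le]
          rintro z hz
          simp only [Set.mem_insert_iff, Set.mem_singleton_iff] at hz
          rcases hz with rfl | rfl
          · rw [SetLike.mem_coe, Submodule.mem_span_pair]
            exact ⟨s, t, by simp only [comb2]; try module⟩
          · rw [SetLike.mem_coe, Submodule.mem_span_pair]
            exact ⟨d, c, by simp only [comb2]; try module⟩
        · -- case B : p = j, q ∉ {i,j}
          have hqj : q ≠ j := Ne.symm hpq
          refine Or.inr (Or.inl ⟨q, c*t*d, hqi, hqj, unit_mul (unit_mul hc ht) hd, ?_⟩)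
          have hBeq : comb2 n j q c d = (c*t) • comb2 n j q t (c*t*d) := by
            ext l
            rw [smul_apply', comb2_apply, comb2_apply]
            rcases ht with rfl | rfl <;> rcases hc with rfl | rfl <;> rcases hd with rfl | rfl <;>
              split_ifs <;> ring
          rw [hWeq]
          refine Submodule.eq_of_le_of_finrank_eq ?_ ?_
          · rw [Submodule.span_le]
            rintro z hz
            simp only [Set.mem_insert_iff, Set.mem_singleton_iff] at hz
            rcases hz with rfl | rfl
            · rw [SetLike.mem_coe, Submodule.mem_span_pair]
              exact ⟨1, 0, by module⟩
            · rw [SetLike.mem_coe, Submodule.mem_span_pair]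
              exact ⟨0, c*t, by rw [hBeq]; module⟩
          · rw [finrank_span_pair_eq_two li, finrank_span_pair_eq_two
              (li_pair (comb2_ne_zero hij (unit_ne_zero hs))
                (comb2_not_smul hqi hqj (Ne.symm hqj) (unit_ne_zero (unit_mul (unit_mul hc ht) hd))))]
      · -- p ∉ {i, j}
        by_cases hqi : q = i
        · subst q
          -- case C : q = i, p ∉ {i,j}
          refine Or.inr (Or.inl ⟨p, -(d*s*c), hpi, hpj, unit_neg (unit_mul (unit_mul hd hs) hc), ?_⟩)
          have hBeq : comb2 n p i c d =
              (d*s) • comb2 n i j s t + (-(d*s)) • comb2 n j p t (-(d*s*c)) := by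
            ext l
            rw [pair_comb_apply, comb2_apply, comb2_apply, comb2_apply]
            rcases hs with rfl | rfl <;> rcases hc with rfl | rfl <;> rcases hd with rfl | rfl <;>
              split_ifs <;> ring
          rw [hWeq]
          refine Submodule.eq_of_le_of_finrank_eq ?_ ?_
          · rw [Submodule.span_le]
            rintro z hz
            simp only [Set.mem_insert_iff, Set.mem_singleton_iff] at hz
            rcases hz with rfl | rfl
            · rw [SetLike.mem_coe, Submodule.mem_span_pair]
              exact ⟨1, 0, by module⟩
            · rw [SetLike.mem_coe, Submodule.mem_span_pair]
              exact ⟨d*s, -(d*s), hBeq.symm⟩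
          · rw [finrank_span_pair_eq_two li, finrank_span_pair_eq_two
              (li_pair (comb2_ne_zero hij (unit_ne_zero hs))
                (comb2_not_smul hpi hpj (Ne.symm hpj) (unit_ne_zero (unit_neg (unit_mul (unit_mul hd hs) hc)))))]
        · by_cases hqj : q = j
          · subst q
            -- case D : q = j, p ∉ {i,j}
            refine Or.inr (Or.inl ⟨p, d*t*c, hpi, hpj, unit_mul (unit_mul hd ht) hc, ?_⟩)
            have hBeq : comb2 n p j c d = (d*t) • comb2 n j p t (d*t*c) := by
              ext l
              rw [smul_apply', comb2_apply, comb2_apply]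
              rcases ht with rfl | rfl <;> rcases hc with rfl | rfl <;> rcases hd with rfl | rfl <;>
                split_ifs <;> ring
            rw [hWeq]
            refine Submodule.eq_of_le_of_finrank_eq ?_ ?_
            · rw [Submodule.span_le]
              rintro z hz
              simp only [Set.mem_insert_iff, Set.mem_singleton_iff] at hz
              rcases hz with rfl | rfl
              · rw [SetLike.mem_coe, Submodule.mem_span_pair]
                exact ⟨1, 0, by module⟩
              · rw [SetLike.mem_coe, Submodule.mem_span_pair]
                exact ⟨0, d*t, by rw [hBeq]; module⟩
            · rw [finrank_span_pair_eq_two li, finrank_span_pair_eq_two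
                (li_pair (comb2_ne_zero hij (unit_ne_zero hs))
                  (comb2_not_smul hpi hpj (Ne.symm hpj) (unit_ne_zero (unit_mul (unit_mul hd ht) hc))))]
          · -- p, q ∉ {i,j}
            refine Or.inr (Or.inr ?_)
            rw [hWeq]
            refine le_trans (Set.ncard_le_ncard (four_subset hij hs ht hβ ?_ ?_) (Set.toFinite _))
              (ncard_le_four _ _ _ _)
            · rw [comb2_apply, if_neg (fun h => hpi h.symm), if_neg (fun h => hqi h.symm), add_zero]
            · rw [comb2_apply, if_neg (fun h => hpj h.symm), if_neg (fun h => hqj h.symm), add_zero]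

lemma spanA2_li {i j k : Fin n} (hij : i ≠ j) (hkj : k ≠ j) {s t ε : ℝ}
    (hs : s = 1 ∨ s = -1) (hε : ε = 1 ∨ ε = -1) (hki : k ≠ i) :
    LinearIndependent ℝ ![comb2 n i j s t, comb2 n j k t ε] :=
  li_pair (comb2_ne_zero hij (unit_ne_zero hs))
    (comb2_not_smul hki hkj (Ne.symm hkj) (unit_ne_zero hε))

lemma S8_eq {i j : Fin n} (hij : i ≠ j) {s t : ℝ}
    (hs : s = 1 ∨ s = -1) (ht : t = 1 ∨ t = -1) :
    {W : Submodule ℝ (EuclideanSpace ℝ (Fin n)) |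
        Module.finrank ℝ W = 2 ∧ comb2 n i j s t ∈ W ∧
        (Croots n ∩ (W : Set (EuclideanSpace ℝ (Fin n)))).ncard = 8} =
      {Submodule.span ℝ {stdVec n i, stdVec n j}} := by
  apply Set.eq_of_subset_of_subset
  · rintro W ⟨h2, hαW, h8⟩
    rcases classify hij hs ht h2 hαW with h | ⟨k, ε, hki, hkj, hε, hWe⟩ | h
    · exact h
    · exfalso
      rw [hWe, six_inter hij (Ne.symm hki) (Ne.symm hkj) hs ht hε,
        six_ncard hij (Ne.symm hki) (Ne.symm hkj) hs ht hε] at h8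
      omega
    · omega
  · rintro W rfl
    refine ⟨by rw [finrank_span_pair_eq_two (li_std hij)], ?_, ?_⟩
    · rw [Submodule.mem_span_pair]
      exact ⟨s, t, by simp only [comb2]; try module⟩
    · rw [eight_inter hij, eight_ncard hij]

lemma S6_eq {i j : Fin n} (hij : i ≠ j) {s t : ℝ}
    (hs : s = 1 ∨ s = -1) (ht : t = 1 ∨ t = -1) :
    {W : Submodule ℝ (EuclideanSpace ℝ (Fin n)) |
        Module.finrank ℝ W = 2 ∧ comb2 n i j s t ∈ W ∧
        (Croots n ∩ (W : Set (EuclideanSpace ℝ (Fin n)))).ncard = 6} =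
      (fun P : Fin n × ℝ => Submodule.span ℝ {comb2 n i j s t, comb2 n j P.1 t P.2}) ''
        {P : Fin n × ℝ | P.1 ≠ i ∧ P.1 ≠ j ∧ (P.2 = 1 ∨ P.2 = -1)} := by
  apply Set.eq_of_subset_of_subset
  · rintro W ⟨h2, hαW, h6⟩
    rcases classify hij hs ht h2 hαW with h | ⟨k, ε, hki, hkj, hε, hWe⟩ | h
    · exfalso
      rw [h, eight_inter hij, eight_ncard hij] at h6
      omega
    · exact ⟨(k, ε), ⟨hki, hkj, hε⟩, hWe.symm⟩
    · omega
  · rintro W ⟨⟨k, ε⟩, ⟨hki, hkj, hε⟩, rfl⟩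
    refine ⟨?_, ?_, ?_⟩
    · exact finrank_span_pair_eq_two (spanA2_li hij hkj hs hε hki)
    · rw [Submodule.mem_span_pair]
      exact ⟨1, 0, by module⟩
    · rw [six_inter hij (Ne.symm hki) (Ne.symm hkj) hs ht hε,
        six_ncard hij (Ne.symm hki) (Ne.symm hkj) hs ht hε]

lemma S6_inj {i j : Fin n} (hij : i ≠ j) {s t : ℝ}
    (hs : s = 1 ∨ s = -1) (ht : t = 1 ∨ t = -1) :
    Set.InjOn (fun P : Fin n × ℝ => Submodule.span ℝ {comb2 n i j s t, comb2 n j P.1 t P.2})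
      {P : Fin n × ℝ | P.1 ≠ i ∧ P.1 ≠ j ∧ (P.2 = 1 ∨ P.2 = -1)} := by
  rintro ⟨k, ε⟩ ⟨hki, hkj, hε⟩ ⟨k', ε'⟩ ⟨hki', hkj', hε'⟩ hspan
  simp only at hspan
  have hs0 := unit_ne_zero hs
  have ht0 := unit_ne_zero ht
  have hε0 := unit_ne_zero hε
  have hmem : comb2 n j k t ε ∈ Croots n ∩
      ↑(Submodule.span ℝ {comb2 n i j s t, comb2 n j k' t ε'}) := by
    refine ⟨croots_short (Ne.symm hkj) ht hε, ?_⟩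
    rw [← hspan, SetLike.mem_coe, Submodule.mem_span_pair]
    exact ⟨0, 1, by module⟩
  rw [six_inter hij (Ne.symm hki') (Ne.symm hkj') hs ht hε'] at hmem
  simp only [sixSet, Set.mem_insert_iff, Set.mem_singleton_iff] at hmem
  have coord : ∀ (a b c : ℝ) (l : Fin n), comb2 n j k t ε = comb3 n i j k' a b c →
      comb2 n j k t ε l = comb3 n i j k' a b c l := fun a b c l h => by rw [h]
  rcases hmem with h | h | h | h | h | h
  · exfalso
    have := coord _ _ _ i h
    rw [comb2_apply, comb3_apply] at this
    simp [hij, Ne.symm hki, hki', Ne.symm hki'] at this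
    exact hs0 this.symm
  · exfalso
    have := coord _ _ _ i h
    rw [comb2_apply, comb3_apply] at this
    simp [hij, Ne.symm hki, hki', Ne.symm hki'] at this
    have : s = 0 := by linarith
    exact hs0 this
  · have hkk : k = k' := by
      by_contra hne
      have := coord _ _ _ k h
      rw [comb2_apply, comb3_apply] at this
      simp [hki, hkj, hne, Ne.symm hki, Ne.symm hkj] at this
      exact hε0 this
    subst hkk
    have := coord _ _ _ k h
    rw [comb2_apply, comb3_apply] at this
    simp [hki, hkj, Ne.symm hki, Ne.symm hkj] at this
    exact Prod.ext rfl this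
  · exfalso
    have := coord _ _ _ j h
    rw [comb2_apply, comb3_apply] at this
    simp [hij, Ne.symm hij, Ne.symm hkj, hkj', Ne.symm hkj'] at this
    exact ht0 (by linarith)
  · exfalso
    have := coord _ _ _ i h
    rw [comb2_apply, comb3_apply] at this
    simp [hij, Ne.symm hki, hki', Ne.symm hki'] at this
    exact hs0 this.symm
  · exfalso
    have := coord _ _ _ i h
    rw [comb2_apply, comb3_apply] at this
    simp [hij, Ne.symm hki, hki', Ne.symm hki'] at this
    have : s = 0 := by linarith
    exact hs0 this

lemma K_ncard {i j : Fin n} (hij : i ≠ j) :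
    ({P : Fin n × ℝ | P.1 ≠ i ∧ P.1 ≠ j ∧ (P.2 = 1 ∨ P.2 = -1)}).ncard = 2 * (n - 2) := by
  classical
  have hKeq : {P : Fin n × ℝ | P.1 ≠ i ∧ P.1 ≠ j ∧ (P.2 = 1 ∨ P.2 = -1)} =
      ↑((({i, j} : Finset (Fin n))ᶜ) ×ˢ ({1, -1} : Finset ℝ)) := by
    ext P
    simp [Finset.mem_product, and_assoc]
    tauto
  rw [hKeq, Set.ncard_coe_finset, Finset.card_product, Finset.card_compl]
  rw [Finset.card_insert_of_notMem (by simp [hij]), Finset.card_singleton]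
  rw [Finset.card_insert_of_notMem (by norm_num), Finset.card_singleton]
  simp [Fintype.card_fin]
  ring

lemma S6_card {i j : Fin n} (hij : i ≠ j) {s t : ℝ}
    (hs : s = 1 ∨ s = -1) (ht : t = 1 ∨ t = -1) :
    ({W : Submodule ℝ (EuclideanSpace ℝ (Fin n)) |
        Module.finrank ℝ W = 2 ∧ comb2 n i j s t ∈ W ∧
        (Croots n ∩ (W : Set (EuclideanSpace ℝ (Fin n)))).ncard = 6}).ncard = 2 * (n - 2) := by
  rw [S6_eq hij hs ht, Set.ncard_image_of_injOn (S6_inj hij hs ht), K_ncard hij]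

lemma S6_short {i j : Fin n} (hij : i ≠ j) {s t : ℝ}
    (hs : s = 1 ∨ s = -1) (ht : t = 1 ∨ t = -1)
    {W : Submodule ℝ (EuclideanSpace ℝ (Fin n))} (h2 : Module.finrank ℝ W = 2)
    (hαW : comb2 n i j s t ∈ W)
    (h6 : (Croots n ∩ (W : Set (EuclideanSpace ℝ (Fin n)))).ncard = 6) :
    ∀ v ∈ Croots n ∩ (W : Set (EuclideanSpace ℝ (Fin n))), IsShortC n v := by
  intro v hv
  rcases classify hij hs ht h2 hαW with h | ⟨k, ε, hki, hkj, hε, hWe⟩ | h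
  · exfalso
    rw [h, eight_inter hij, eight_ncard hij] at h6
    omega
  · rw [hWe, six_inter hij (Ne.symm hki) (Ne.symm hkj) hs ht hε] at hv
    simp only [sixSet, Set.mem_insert_iff, Set.mem_singleton_iff] at hv
    rcases hv with rfl | rfl | rfl | rfl | rfl | rfl
    · exact ⟨i, j, hij, s, t, hs, ht, by rw [comb3_left]; rfl⟩
    · exact ⟨i, j, hij, -s, -t, unit_neg hs, unit_neg ht, by rw [comb3_left]; rfl⟩
    · exact ⟨j, k, Ne.symm hkj, t, ε, ht, hε, by rw [comb3_right]; rfl⟩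
    · exact ⟨j, k, Ne.symm hkj, -t, -ε, unit_neg ht, unit_neg hε, by rw [comb3_right]; rfl⟩
    · exact ⟨i, k, Ne.symm hki, s, -ε, hs, unit_neg hε, by rw [comb3_mid]; rfl⟩
    · exact ⟨i, k, Ne.symm hki, -s, ε, unit_neg hs, hε, by rw [comb3_mid]; rfl⟩
  · omega

end C8

/-- in `C_n` (`n ≥ 3`), every short root `α` lies in exactly one
two-dimensional subspace `W` with `C_n ∩ W` of type `C_2` (8 roots), and in exactly
`2(n-2)` two-dimensional subspaces `W` with `C_n ∩ W` of type `A_2` (6 roots, all short). -/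
theorem stmt8 (n : ℕ) (hn : 3 ≤ n)
    (α : EuclideanSpace ℝ (Fin n)) (hα : IsShortC n α) :
    ({W : Submodule ℝ (EuclideanSpace ℝ (Fin n)) |
        Module.finrank ℝ W = 2 ∧ α ∈ W ∧
        (Croots n ∩ (W : Set (EuclideanSpace ℝ (Fin n)))).ncard = 8}.ncard = 1) ∧
    ({W : Submodule ℝ (EuclideanSpace ℝ (Fin n)) |
        Module.finrank ℝ W = 2 ∧ α ∈ W ∧
        (Croots n ∩ (W : Set (EuclideanSpace ℝ (Fin n)))).ncard = 6}.ncard = 2 * (n - 2)) ∧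
    ∀ W : Submodule ℝ (EuclideanSpace ℝ (Fin n)),
      Module.finrank ℝ W = 2 → α ∈ W →
      (Croots n ∩ (W : Set (EuclideanSpace ℝ (Fin n)))).ncard = 6 →
      ∀ v ∈ Croots n ∩ (W : Set (EuclideanSpace ℝ (Fin n))), IsShortC n v := by
  obtain ⟨i, j, hij, s, t, hs, ht, hαeq⟩ := hα
  have hα2 : α = comb2 n i j s t := hαeq
  subst hα2
  refine ⟨?_, ?_, ?_⟩
  · rw [C8.S8_eq hij hs ht]
    exact Set.ncard_singleton _
  · exact C8.S6_card hij hs ht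
  · intro W h2 hm h6
    exact C8.S6_short hij hs ht h2 hm h6
end

section
/- For the root system D_n (n ≥ 4) realized in ℝ^n as {±e_i ± e_j : 1 ≤ i < j ≤ n}, every root lies in exactly 2(n-2) irreducible admissible 2-dimensional subspaces, i.e., γ(D_n) = 2(n-2). Moreover each such subspace intersects D_n in a subsystem of type A_2 (6 roots). -/
open scoped RealInnerProductSpace

/-- The root system of type `D_n` realized in `ℝⁿ` as `{±e_i ± e_j : i ≠ j}`. -/
def Droots (n : ℕ) : Set (EuclideanSpace ℝ (Fin n)) :=
  {v | ∃ i j : Fin n, i ≠ j ∧ ∃ s t : ℝ, (s = 1 ∨ s = -1) ∧ (t = 1 ∨ t = -1) ∧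
    v = s • stdVec n i + t • stdVec n j}

variable {n : ℕ}

lemma pair_apply (i j : Fin n) (s t : ℝ) (m : Fin n) :
    (s • stdVec n i + t • stdVec n j) m
      = (if m = i then s else 0) + (if m = j then t else 0) := by
  simp [stdVec, EuclideanSpace.single_apply, mul_ite]

lemma root_coord {v : EuclideanSpace ℝ (Fin n)} (hv : v ∈ Droots n) (m : Fin n) :
    v m = -1 ∨ v m = 0 ∨ v m = 1 := by
  obtain ⟨i, j, hij, s, t, hs, ht, rfl⟩ := hv
  rw [pair_apply]
  rcases hs with rfl | rfl <;> rcases ht with rfl | rfl <;> split_ifs <;> simp_all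

lemma root_struct {v : EuclideanSpace ℝ (Fin n)} (hv : v ∈ Droots n) :
    ∃ p q : Fin n, p ≠ q ∧ v p ≠ 0 ∧ v q ≠ 0 ∧ ∀ m, m ≠ p → m ≠ q → v m = 0 := by
  obtain ⟨i, j, hij, s, t, hs, ht, rfl⟩ := hv
  refine ⟨i, j, hij, ?_, ?_, ?_⟩
  · rw [pair_apply]; rcases hs with rfl | rfl <;> simp [hij] <;> norm_num
  · rw [pair_apply]; rcases ht with rfl | rfl <;> simp [hij.symm] <;> norm_num
  · intro m hmi hmj; rw [pair_apply]; simp [hmi, hmj]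

lemma root_ne_zero {v : EuclideanSpace ℝ (Fin n)} (hv : v ∈ Droots n) : v ≠ 0 := by
  obtain ⟨p, q, hpq, hp, _, _⟩ := root_struct hv
  intro h
  exact hp (by rw [h]; rfl)

lemma root_smul {v w : EuclideanSpace ℝ (Fin n)} (hv : v ∈ Droots n) (hw : w ∈ Droots n)
    {c : ℝ} (h : w = c • v) : w = v ∨ w = -v := by
  obtain ⟨p, q, hpq, hp, _, _⟩ := root_struct hv
  have hvp := root_coord hv p
  have hwp : w p = c * v p := by rw [h]; rfl
  have hwpc := root_coord hw p
  have hc : c = -1 ∨ c = 0 ∨ c = 1 := by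
    rcases hvp with h1 | h1 | h1 <;> rw [h1] at hwp <;> rcases hwpc with h2 | h2 | h2 <;>
      rw [h2] at hwp <;> [skip; skip; skip; skip; skip; skip; skip; skip; skip] <;> try tauto
    all_goals (first | (left; linarith) | (right; left; linarith) | (right; right; linarith) | exact absurd h1 hp)
  rcases hc with rfl | rfl | rfl
  · right; rw [h]; module
  · exfalso; exact root_ne_zero hw (by rw [h]; simp)
  · left; rw [h]; module

section spanlemmas
variable {R M : Type*} [Ring R] [AddCommGroup M] [Module R M]

lemma span_pair_neg_right (x y : M) :
    Submodule.span R {x, -y} = Submodule.span R {x, y} := by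
  apply le_antisymm <;> rw [Submodule.span_le] <;> rintro z (rfl | rfl)
  · exact Submodule.subset_span (by simp)
  · exact Submodule.neg_mem _ (Submodule.subset_span (by simp))
  · exact Submodule.subset_span (by simp)
  · exact (Submodule.neg_mem_iff _).mp (Submodule.subset_span (by simp))

lemma span_pair_sub_right (x y : M) :
    Submodule.span R {x, x - y} = Submodule.span R {x, y} := by
  apply le_antisymm <;> rw [Submodule.span_le] <;> rintro z (rfl | h) <;>
    [skip; (rw [h]); skip; (rw [h, show y = x - (x - y) by abel])]
  · exact Submodule.subset_span (by simp)
  · exact Submodule.sub_mem _ (Submodule.subset_span (by simp))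
      (Submodule.subset_span (by simp))
  · exact Submodule.subset_span (by simp)
  · exact Submodule.sub_mem _ (Submodule.subset_span (by simp))
      (Submodule.subset_span (by simp))

end spanlemmas

lemma finrank_span_pair {V : Type*} [AddCommGroup V] [Module ℝ V] {x y : V}
    (h : LinearIndependent ℝ ![x, y]) :
    Module.finrank ℝ (Submodule.span ℝ {x, y}) = 2 := by
  have := finrank_span_eq_card h
  rwa [show Set.range ![x, y] = {x, y} by
    ext z; simp [Matrix.range_cons, Matrix.range_empty, or_comm], Fintype.card_fin] at this

lemma neg_sign {s : ℝ} (hs : s = 1 ∨ s = -1) : -s = 1 ∨ -s = -1 := by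
  rcases hs with rfl | rfl <;> norm_num

lemma mem_droots (i j : Fin n) (hij : i ≠ j) (s t : ℝ)
    (hs : s = 1 ∨ s = -1) (ht : t = 1 ∨ t = -1) :
    s • stdVec n i + t • stdVec n j ∈ Droots n := ⟨i, j, hij, s, t, hs, ht, rfl⟩

lemma inter_span_eq (i j k : Fin n) (hij : i ≠ j) (hik : i ≠ k) (hjk : j ≠ k)
    (s t u : ℝ) (hs : s = 1 ∨ s = -1) (ht : t = 1 ∨ t = -1) (hu : u = 1 ∨ u = -1) :
    Droots n ∩ (Submodule.span ℝ {s • stdVec n i + t • stdVec n j,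
        s • stdVec n i + u • stdVec n k} : Set (EuclideanSpace ℝ (Fin n)))
      = {s • stdVec n i + t • stdVec n j, -(s • stdVec n i + t • stdVec n j),
         s • stdVec n i + u • stdVec n k, -(s • stdVec n i + u • stdVec n k),
         t • stdVec n j + (-u) • stdVec n k, -(t • stdVec n j + (-u) • stdVec n k)} := by
  have hs2 : s * s = 1 := by rcases hs with rfl | rfl <;> norm_num
  ext v
  constructor
  · rintro ⟨hv, hsp⟩
    obtain ⟨a, b, hab⟩ := Submodule.mem_span_pair.mp hsp
    have hne := root_ne_zero hv
    have cv : ∀ m, v m = a * ((if m = i then s else 0) + (if m = j then t else 0))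
        + b * ((if m = i then s else 0) + (if m = k then u else 0)) := by
      intro m
      rw [← hab]
      simp only [PiLp.add_apply, PiLp.smul_apply, smul_eq_mul, pair_apply, stdVec,
        EuclideanSpace.single_apply]
      split_ifs <;> ring
    have hvj : v j = a * t := by rw [cv j]; simp [hij.symm, hjk]
    have hvk : v k = b * u := by rw [cv k]; simp [hik.symm, hjk.symm]
    have hvi : v i = (a + b) * s := by rw [cv i]; simp [hij, hik]; ring
    have ha : a = -1 ∨ a = 0 ∨ a = 1 := by
      have h' := root_coord hv j; rw [hvj] at h'
      rcases ht with rfl | rfl <;> rcases h' with h | h | h <;>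
        first | (left; linarith) | (right; left; linarith) | (right; right; linarith)
    have hb : b = -1 ∨ b = 0 ∨ b = 1 := by
      have h' := root_coord hv k; rw [hvk] at h'
      rcases hu with rfl | rfl <;> rcases h' with h | h | h <;>
        first | (left; linarith) | (right; left; linarith) | (right; right; linarith)
    have hab' : a + b = -1 ∨ a + b = 0 ∨ a + b = 1 := by
      have h' := root_coord hv i; rw [hvi] at h'
      rcases hs with rfl | rfl <;> rcases h' with h | h | h <;>
        first | (left; linarith) | (right; left; linarith) | (right; right; linarith)
    clear hvj hvk hvi cv hsp hv
    simp only [Set.mem_insert_iff, Set.mem_singleton_iff]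
    rcases ha with rfl | rfl | rfl <;> rcases hb with rfl | rfl | rfl
    · exfalso; rcases hab' with h | h | h <;> norm_num at h
    · right; left; rw [← hab]; module
    · right; right; right; right; right; rw [← hab]; module
    · right; right; right; left; rw [← hab]; module
    · exfalso; apply hne; rw [← hab]; simp
    · right; right; left; rw [← hab]; module
    · right; right; right; right; left; rw [← hab]; module
    · left; rw [← hab]; module
    · exfalso; rcases hab' with h | h | h <;> norm_num at h
  · intro hv
    simp only [Set.mem_insert_iff, Set.mem_singleton_iff] at hv
    rcases hv with rfl | rfl | rfl | rfl | rfl | rfl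
    · exact ⟨mem_droots i j hij s t hs ht, Submodule.mem_span_pair.mpr ⟨1, 0, by module⟩⟩
    · refine ⟨?_, Submodule.mem_span_pair.mpr ⟨-1, 0, by module⟩⟩
      rw [show -(s • stdVec n i + t • stdVec n j)
          = (-s) • stdVec n i + (-t) • stdVec n j by module]
      exact mem_droots i j hij (-s) (-t) (neg_sign hs) (neg_sign ht)
    · exact ⟨mem_droots i k hik s u hs hu, Submodule.mem_span_pair.mpr ⟨0, 1, by module⟩⟩
    · refine ⟨?_, Submodule.mem_span_pair.mpr ⟨0, -1, by module⟩⟩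
      rw [show -(s • stdVec n i + u • stdVec n k)
          = (-s) • stdVec n i + (-u) • stdVec n k by module]
      exact mem_droots i k hik (-s) (-u) (neg_sign hs) (neg_sign hu)
    · exact ⟨mem_droots j k hjk t (-u) ht (neg_sign hu),
        Submodule.mem_span_pair.mpr ⟨1, -1, by module⟩⟩
    · refine ⟨?_, Submodule.mem_span_pair.mpr ⟨-1, 1, by module⟩⟩
      rw [show -(t • stdVec n j + (-u) • stdVec n k)
          = (-t) • stdVec n j + u • stdVec n k by module]
      exact mem_droots j k hjk (-t) u (neg_sign ht) hu

lemma vec_ne {v w : EuclideanSpace ℝ (Fin n)} (m : Fin n) (h : v m ≠ w m) : v ≠ w :=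
  fun e => h (by rw [e])

lemma ncard_six (i j k : Fin n) (hij : i ≠ j) (hik : i ≠ k) (hjk : j ≠ k)
    (s t u : ℝ) (hs : s = 1 ∨ s = -1) (ht : t = 1 ∨ t = -1) (hu : u = 1 ∨ u = -1) :
    ({s • stdVec n i + t • stdVec n j, -(s • stdVec n i + t • stdVec n j),
      s • stdVec n i + u • stdVec n k, -(s • stdVec n i + u • stdVec n k),
      t • stdVec n j + (-u) • stdVec n k, -(t • stdVec n j + (-u) • stdVec n k)}
      : Set (EuclideanSpace ℝ (Fin n))).ncard = 6 := by
  set α := s • stdVec n i + t • stdVec n j with hα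
  set β := s • stdVec n i + u • stdVec n k with hβ
  set γ := t • stdVec n j + (-u) • stdVec n k with hγ
  have cαi : α i = s := by rw [hα, pair_apply]; simp [hij]
  have cαj : α j = t := by rw [hα, pair_apply]; simp [hij.symm]
  have cβi : β i = s := by rw [hβ, pair_apply]; simp [hik]
  have cβj : β j = 0 := by rw [hβ, pair_apply]; simp [hij.symm, hjk]
  have cγi : γ i = 0 := by rw [hγ, pair_apply]; simp [hij, hik]
  have cγj : γ j = t := by rw [hγ, pair_apply]; simp [hjk]
  have hs0 : s ≠ 0 := by rcases hs with rfl | rfl <;> norm_num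
  have ht0 : t ≠ 0 := by rcases ht with rfl | rfl <;> norm_num
  have hss : s ≠ -s := by rcases hs with rfl | rfl <;> norm_num
  have htt : t ≠ -t := by rcases ht with rfl | rfl <;> norm_num
  have h12 : α ≠ -α := vec_ne i (by rw [cαi, PiLp.neg_apply, cαi]; exact hss)
  have h13 : α ≠ β := vec_ne j (by rw [cαj, cβj]; exact ht0)
  have h14 : α ≠ -β := vec_ne j (by rw [cαj, PiLp.neg_apply, cβj]; simpa using ht0)
  have h15 : α ≠ γ := vec_ne i (by rw [cαi, cγi]; exact hs0)
  have h16 : α ≠ -γ := vec_ne i (by rw [cαi, PiLp.neg_apply, cγi]; simpa using hs0)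
  have h23 : -α ≠ β := vec_ne j (by rw [PiLp.neg_apply, cαj, cβj]; simpa using ht0)
  have h24 : -α ≠ -β := vec_ne j (by rw [PiLp.neg_apply, PiLp.neg_apply, cαj, cβj]; simpa using ht0)
  have h25 : -α ≠ γ := vec_ne i (by rw [PiLp.neg_apply, cαi, cγi]; simpa using hs0)
  have h26 : -α ≠ -γ := vec_ne i (by rw [PiLp.neg_apply, PiLp.neg_apply, cαi, cγi]; simpa using hs0)
  have h34 : β ≠ -β := vec_ne i (by rw [cβi, PiLp.neg_apply, cβi]; exact hss)
  have h35 : β ≠ γ := vec_ne i (by rw [cβi, cγi]; exact hs0)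
  have h36 : β ≠ -γ := vec_ne i (by rw [cβi, PiLp.neg_apply, cγi]; simpa using hs0)
  have h45 : -β ≠ γ := vec_ne i (by rw [PiLp.neg_apply, cβi, cγi]; simpa using hs0)
  have h46 : -β ≠ -γ := vec_ne i (by rw [PiLp.neg_apply, PiLp.neg_apply, cβi, cγi]; simpa using hs0)
  have h56 : γ ≠ -γ := vec_ne j (by rw [cγj, PiLp.neg_apply, cγj]; exact htt)
  rw [Set.ncard_insert_of_notMem (by simp_all), Set.ncard_insert_of_notMem (by simp_all),
    Set.ncard_insert_of_notMem (by simp_all), Set.ncard_insert_of_notMem (by simp_all),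
    Set.ncard_pair h56]

lemma sgn_ne_zero {s : ℝ} (hs : s = 1 ∨ s = -1) : s ≠ 0 := by
  rcases hs with rfl | rfl <;> norm_num

lemma ncard_le_four {X : Type*} (a b c d : X) : ({a, b, c, d} : Set X).ncard ≤ 4 := by
  refine le_trans (Set.ncard_insert_le _ _) ?_
  refine le_trans (Nat.add_le_add_right (Set.ncard_insert_le _ _) 1) ?_
  refine le_trans (Nat.add_le_add_right (Nat.add_le_add_right (Set.ncard_insert_le _ _) 1) 1) ?_
  simp [Set.ncard_singleton]

lemma root_not_prop {v w : EuclideanSpace ℝ (Fin n)} (hv : v ∈ Droots n) (hw : w ∈ Droots n)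
    (h1 : w ≠ v) (h2 : w ≠ -v) : LinearIndependent ℝ ![v, w] := by
  rw [LinearIndependent.pair_iff]
  intro a b hab
  by_cases hb : b = 0
  · subst hb
    simp only [zero_smul, add_zero, smul_eq_zero] at hab
    rcases hab with rfl | h
    · exact ⟨rfl, rfl⟩
    · exact absurd h (root_ne_zero hv)
  · exfalso
    have : w = (-a / b) • v := by
      have : b • w = (-a) • v := by
        rw [neg_smul, eq_neg_iff_add_eq_zero, add_comm]; exact hab
      have := congrArg (fun x => b⁻¹ • x) this
      simp only [smul_smul, inv_mul_cancel₀ hb, one_smul] at this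
      rw [this]; module
    rcases root_smul hv hw this with h | h
    · exact h1 h
    · exact h2 h

/-- coordinates of an element of the span of two `rtv`s supported on `{i,j}` and `{p,q}`. -/
lemma bad_disjoint (i j p q : Fin n) (hij : i ≠ j) (hpq : p ≠ q)
    (hpi : p ≠ i) (hpj : p ≠ j) (hqi : q ≠ i) (hqj : q ≠ j)
    (s t s' t' : ℝ) (hs : s = 1 ∨ s = -1) (ht : t = 1 ∨ t = -1)
    (hs' : s' = 1 ∨ s' = -1) (ht' : t' = 1 ∨ t' = -1) :
    Droots n ∩ (Submodule.span ℝ {s • stdVec n i + t • stdVec n j,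
        s' • stdVec n p + t' • stdVec n q} : Set (EuclideanSpace ℝ (Fin n)))
      ⊆ {s • stdVec n i + t • stdVec n j, -(s • stdVec n i + t • stdVec n j),
         s' • stdVec n p + t' • stdVec n q, -(s' • stdVec n p + t' • stdVec n q)} := by
  rintro v ⟨hv, hsp⟩
  obtain ⟨a, b, hab⟩ := Submodule.mem_span_pair.mp hsp
  have hne := root_ne_zero hv
  have cv : ∀ m, v m = a * ((if m = i then s else 0) + (if m = j then t else 0))
      + b * ((if m = p then s' else 0) + (if m = q then t' else 0)) := by
    intro m
    rw [← hab]
    simp only [PiLp.add_apply, PiLp.smul_apply, smul_eq_mul, stdVec,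
      EuclideanSpace.single_apply]
    split_ifs <;> ring
  have hvi : v i = a * s := by rw [cv i]; simp [hpi.symm, hqi.symm, hij]
  have hvj : v j = a * t := by rw [cv j]; simp [hpj.symm, hqj.symm, hij.symm]
  have hvp : v p = b * s' := by rw [cv p]; simp [hpi, hpj, hpq]
  have ha : a = -1 ∨ a = 0 ∨ a = 1 := by
    have h' := root_coord hv i; rw [hvi] at h'
    rcases hs with rfl | rfl <;> rcases h' with h | h | h <;>
      first | (left; linarith) | (right; left; linarith) | (right; right; linarith)
  have hb : b = -1 ∨ b = 0 ∨ b = 1 := by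
    have h' := root_coord hv p; rw [hvp] at h'
    rcases hs' with rfl | rfl <;> rcases h' with h | h | h <;>
      first | (left; linarith) | (right; left; linarith) | (right; right; linarith)
  have key : a = 0 ∨ b = 0 := by
    by_contra hcon
    push_neg at hcon
    obtain ⟨ha0, hb0⟩ := hcon
    obtain ⟨p', q', hp'q', hvp', hvq', hrest⟩ := root_struct hv
    have himem : i = p' ∨ i = q' := by
      by_contra hcc; push_neg at hcc
      exact absurd (hrest i hcc.1 hcc.2) (by rw [hvi]; exact mul_ne_zero ha0 (sgn_ne_zero hs))
    have hjmem : j = p' ∨ j = q' := by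
      by_contra hcc; push_neg at hcc
      exact absurd (hrest j hcc.1 hcc.2) (by rw [hvj]; exact mul_ne_zero ha0 (sgn_ne_zero ht))
    have hpmem : p = p' ∨ p = q' := by
      by_contra hcc; push_neg at hcc
      exact absurd (hrest p hcc.1 hcc.2) (by rw [hvp]; exact mul_ne_zero hb0 (sgn_ne_zero hs'))
    rcases himem with rfl | rfl <;> rcases hjmem with h2 | h2 <;>
      rcases hpmem with h3 | h3 <;> simp_all
  simp only [Set.mem_insert_iff, Set.mem_singleton_iff]
  rcases key with rfl | rfl
  · rcases hb with rfl | rfl | rfl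
    · right; right; right; rw [← hab]; module
    · exfalso; apply hne; rw [← hab]; simp
    · right; right; left; rw [← hab]; module
  · rcases ha with rfl | rfl | rfl
    · right; left; rw [← hab]; module
    · exfalso; apply hne; rw [← hab]; simp
    · left; rw [← hab]; module

lemma bad_equal (i j : Fin n) (hij : i ≠ j) (s t : ℝ)
    (hs : s = 1 ∨ s = -1) (ht : t = 1 ∨ t = -1) :
    Droots n ∩ (Submodule.span ℝ {s • stdVec n i + t • stdVec n j,
        s • stdVec n i + (-t) • stdVec n j} : Set (EuclideanSpace ℝ (Fin n)))
      ⊆ {s • stdVec n i + t • stdVec n j, -(s • stdVec n i + t • stdVec n j),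
         s • stdVec n i + (-t) • stdVec n j, -(s • stdVec n i + (-t) • stdVec n j)} := by
  rintro v ⟨hv, hsp⟩
  obtain ⟨a, b, hab⟩ := Submodule.mem_span_pair.mp hsp
  have cv : ∀ m, v m = a * ((if m = i then s else 0) + (if m = j then t else 0))
      + b * ((if m = i then s else 0) + (if m = j then -t else 0)) := by
    intro m
    rw [← hab]
    simp only [PiLp.add_apply, PiLp.smul_apply, smul_eq_mul, stdVec,
      EuclideanSpace.single_apply]
    split_ifs <;> ring
  have hvi : v i = (a + b) * s := by rw [cv i]; simp [hij]; ring
  have hvj : v j = (a - b) * t := by rw [cv j]; simp [hij.symm]; ring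
  have hrest : ∀ m, m ≠ i → m ≠ j → v m = 0 := by
    intro m h1 h2; rw [cv m]; simp [h1, h2]
  obtain ⟨p', q', hp'q', hvp', hvq', hr'⟩ := root_struct hv
  have hpmem : p' = i ∨ p' = j := by
    by_contra hcc; push_neg at hcc; exact hvp' (hrest p' hcc.1 hcc.2)
  have hqmem : q' = i ∨ q' = j := by
    by_contra hcc; push_neg at hcc; exact hvq' (hrest q' hcc.1 hcc.2)
  have hvij : v i ≠ 0 ∧ v j ≠ 0 := by
    rcases hpmem with rfl | rfl <;> rcases hqmem with rfl | rfl <;> simp_all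
  have h1 : a + b = -1 ∨ a + b = 1 := by
    have h' := root_coord hv i; rw [hvi] at h'
    have h0 : (a + b) * s ≠ 0 := by rw [← hvi]; exact hvij.1
    rcases hs with rfl | rfl <;> rcases h' with h | h | h <;>
      first | (left; linarith) | (right; linarith) | (exact absurd h (by rw [← hvi] at h ⊢; simp_all))
  have h2 : a - b = -1 ∨ a - b = 1 := by
    have h' := root_coord hv j; rw [hvj] at h'
    have h0 : (a - b) * t ≠ 0 := by rw [← hvj]; exact hvij.2
    rcases ht with rfl | rfl <;> rcases h' with h | h | h <;>
      first | (left; linarith) | (right; linarith) | (exact absurd h (by rw [← hvj] at h ⊢; simp_all))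
  simp only [Set.mem_insert_iff, Set.mem_singleton_iff]
  rcases h1 with h1 | h1 <;> rcases h2 with h2 | h2
  · have ha : a = -1 := by linarith
    have hb : b = 0 := by linarith
    subst ha; subst hb; right; left; rw [← hab]; module
  · have ha : a = 0 := by linarith
    have hb : b = -1 := by linarith
    subst ha; subst hb; right; right; right; rw [← hab]; module
  · have ha : a = 0 := by linarith
    have hb : b = 1 := by linarith
    subst ha; subst hb; right; right; left; rw [← hab]; module
  · have ha : a = 1 := by linarith
    have hb : b = 0 := by linarith
    subst ha; subst hb; left; rw [← hab]; module

lemma sign_cases {x y : ℝ} (hx : x = 1 ∨ x = -1) (hy : y = 1 ∨ y = -1) :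
    x = y ∨ x = -y := by
  rcases hx with rfl | rfl <;> rcases hy with rfl | rfl <;> norm_num

lemma aux_i (i j q : Fin n) (hqi : q ≠ i) (hqj : q ≠ j)
    (s t s₀ t₀ : ℝ) (hs : s = 1 ∨ s = -1) (hs₀ : s₀ = 1 ∨ s₀ = -1)
    (ht₀ : t₀ = 1 ∨ t₀ = -1) (W : Submodule ℝ (EuclideanSpace ℝ (Fin n)))
    (hW : W = Submodule.span ℝ {s • stdVec n i + t • stdVec n j,
      s₀ • stdVec n i + t₀ • stdVec n q}) :
    ∃ (k : Fin n) (u : ℝ), k ≠ i ∧ k ≠ j ∧ (u = 1 ∨ u = -1) ∧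
      W = Submodule.span ℝ {s • stdVec n i + t • stdVec n j,
        s • stdVec n i + u • stdVec n k} := by
  rcases sign_cases hs₀ hs with h | h <;> rw [h] at hW
  · exact ⟨q, t₀, hqi, hqj, ht₀, hW⟩
  · refine ⟨q, -t₀, hqi, hqj, neg_sign ht₀, ?_⟩
    rw [hW, show (-s) • stdVec n i + t₀ • stdVec n q
      = -(s • stdVec n i + (-t₀) • stdVec n q) by module, span_pair_neg_right]

lemma aux_j (i j q : Fin n) (hqi : q ≠ i) (hqj : q ≠ j)
    (s t s₀ t₀ : ℝ) (ht : t = 1 ∨ t = -1) (hs₀ : s₀ = 1 ∨ s₀ = -1)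
    (ht₀ : t₀ = 1 ∨ t₀ = -1) (W : Submodule ℝ (EuclideanSpace ℝ (Fin n)))
    (hW : W = Submodule.span ℝ {s • stdVec n i + t • stdVec n j,
      s₀ • stdVec n j + t₀ • stdVec n q}) :
    ∃ (k : Fin n) (u : ℝ), k ≠ i ∧ k ≠ j ∧ (u = 1 ∨ u = -1) ∧
      W = Submodule.span ℝ {s • stdVec n i + t • stdVec n j,
        s • stdVec n i + u • stdVec n k} := by
  rcases sign_cases hs₀ ht with h | h <;> rw [h] at hW
  · refine ⟨q, -t₀, hqi, hqj, neg_sign ht₀, ?_⟩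
    rw [hW, show t • stdVec n j + t₀ • stdVec n q
      = (s • stdVec n i + t • stdVec n j) - (s • stdVec n i + (-t₀) • stdVec n q) by module,
      span_pair_sub_right]
  · refine ⟨q, t₀, hqi, hqj, ht₀, ?_⟩
    rw [hW, show (-t) • stdVec n j + t₀ • stdVec n q
      = -((s • stdVec n i + t • stdVec n j) - (s • stdVec n i + t₀ • stdVec n q)) by module,
      span_pair_neg_right, span_pair_sub_right]

lemma bad2 (i j : Fin n) (hij : i ≠ j) (s t s₀ t₀ : ℝ)
    (hs : s = 1 ∨ s = -1) (ht : t = 1 ∨ t = -1)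
    (hs₀ : s₀ = 1 ∨ s₀ = -1) (ht₀ : t₀ = 1 ∨ t₀ = -1)
    (hβα : s₀ • stdVec n i + t₀ • stdVec n j ≠ s • stdVec n i + t • stdVec n j)
    (hβα' : s₀ • stdVec n i + t₀ • stdVec n j ≠ -(s • stdVec n i + t • stdVec n j))
    (W : Submodule ℝ (EuclideanSpace ℝ (Fin n)))
    (hW : W = Submodule.span ℝ {s • stdVec n i + t • stdVec n j,
      s₀ • stdVec n i + t₀ • stdVec n j})
    (h5 : 5 ≤ (Droots n ∩ (W : Set (EuclideanSpace ℝ (Fin n)))).ncard) : False := by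
  have hW2 : W = Submodule.span ℝ {s • stdVec n i + t • stdVec n j,
      s • stdVec n i + (-t) • stdVec n j} := by
    rcases sign_cases hs₀ hs with h | h <;> rcases sign_cases ht₀ ht with h' | h' <;>
      rw [h, h'] at hW hβα hβα'
    · exact absurd rfl hβα
    · exact hW
    · rw [hW, show (-s) • stdVec n i + t • stdVec n j
        = -(s • stdVec n i + (-t) • stdVec n j) by module, span_pair_neg_right]
    · exact absurd (by module) hβα'
  have hsub : Droots n ∩ (W : Set (EuclideanSpace ℝ (Fin n)))
      ⊆ {s • stdVec n i + t • stdVec n j, -(s • stdVec n i + t • stdVec n j),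
         s • stdVec n i + (-t) • stdVec n j, -(s • stdVec n i + (-t) • stdVec n j)} := by
    rw [hW2]; exact bad_equal i j hij s t hs ht
  have hfin : ({s • stdVec n i + t • stdVec n j, -(s • stdVec n i + t • stdVec n j),
      s • stdVec n i + (-t) • stdVec n j, -(s • stdVec n i + (-t) • stdVec n j)}
      : Set (EuclideanSpace ℝ (Fin n))).Finite :=
    (((Set.finite_singleton _).insert _).insert _).insert _
  have := (Set.ncard_le_ncard hsub hfin).trans (ncard_le_four _ _ _ _)
  omega

lemma classify (i j : Fin n) (hij : i ≠ j) (s t : ℝ)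
    (hs : s = 1 ∨ s = -1) (ht : t = 1 ∨ t = -1)
    (W : Submodule ℝ (EuclideanSpace ℝ (Fin n)))
    (hW2 : Module.finrank ℝ W = 2)
    (h5 : 5 ≤ (Droots n ∩ (W : Set (EuclideanSpace ℝ (Fin n)))).ncard)
    (hαW : s • stdVec n i + t • stdVec n j ∈ W) :
    ∃ (k : Fin n) (u : ℝ), k ≠ i ∧ k ≠ j ∧ (u = 1 ∨ u = -1) ∧
      W = Submodule.span ℝ {s • stdVec n i + t • stdVec n j,
        s • stdVec n i + u • stdVec n k} := by
  have hαr : s • stdVec n i + t • stdVec n j ∈ Droots n := mem_droots i j hij s t hs ht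
  have hex : ∃ β, β ∈ Droots n ∧ β ∈ W ∧ β ≠ s • stdVec n i + t • stdVec n j ∧
      β ≠ -(s • stdVec n i + t • stdVec n j) := by
    by_contra hc
    push_neg at hc
    have hsub : Droots n ∩ (W : Set (EuclideanSpace ℝ (Fin n)))
        ⊆ {s • stdVec n i + t • stdVec n j, -(s • stdVec n i + t • stdVec n j)} := by
      rintro v ⟨h1, h2⟩
      by_cases hv : v = s • stdVec n i + t • stdVec n j
      · exact Or.inl hv
      · exact Or.inr (hc v h1 h2 hv)
    have hb := Set.ncard_le_ncard hsub ((Set.finite_singleton _).insert _)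
    have hb2 : ({s • stdVec n i + t • stdVec n j, -(s • stdVec n i + t • stdVec n j)}
        : Set (EuclideanSpace ℝ (Fin n))).ncard ≤ 2 :=
      (Set.ncard_insert_le _ _).trans (by simp)
    omega
  obtain ⟨β, hβr, hβW, hβα, hβα'⟩ := hex
  have hli := root_not_prop hαr hβr hβα hβα'
  have hWspan : W = Submodule.span ℝ {s • stdVec n i + t • stdVec n j, β} := by
    refine (Submodule.eq_of_le_of_finrank_le ?_ ?_).symm
    · rw [Submodule.span_le, Set.insert_subset_iff, Set.singleton_subset_iff]
      exact ⟨hαW, hβW⟩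
    · rw [hW2, finrank_span_pair hli]
  obtain ⟨p, q, hpq, s', t', hs', ht', rfl⟩ := hβr
  by_cases hpi : p = i
  · by_cases hqj : q = j
    · rw [hpi, hqj] at hWspan hβα hβα'
      exact absurd (bad2 i j hij s t s' t' hs ht hs' ht' hβα hβα' W hWspan h5) id
    · rw [hpi] at hWspan
      exact aux_i i j q (fun h => hpq (by rw [hpi, h])) hqj s t s' t' hs hs' ht' W hWspan
  · by_cases hpj : p = j
    · by_cases hqi : q = i
      · rw [hpj, hqi] at hWspan hβα hβα'
        rw [show s' • stdVec n j + t' • stdVec n i = t' • stdVec n i + s' • stdVec n j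
          by module] at hWspan hβα hβα'
        exact absurd (bad2 i j hij s t t' s' hs ht ht' hs' hβα hβα' W hWspan h5) id
      · rw [hpj] at hWspan
        exact aux_j i j q hqi (fun h => hpq (by rw [hpj, h])) s t s' t' ht hs' ht' W hWspan
    · by_cases hqi : q = i
      · rw [hqi, show s' • stdVec n p + t' • stdVec n i = t' • stdVec n i + s' • stdVec n p
          by module] at hWspan
        exact aux_i i j p hpi hpj s t t' s' hs ht' hs' W hWspan
      · by_cases hqj : q = j
        · rw [hqj, show s' • stdVec n p + t' • stdVec n j = t' • stdVec n j + s' • stdVec n p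
            by module] at hWspan
          exact aux_j i j p hpi hpj s t t' s' ht ht' hs' W hWspan
        · exfalso
          have hsub : Droots n ∩ (W : Set (EuclideanSpace ℝ (Fin n)))
              ⊆ {s • stdVec n i + t • stdVec n j, -(s • stdVec n i + t • stdVec n j),
                 s' • stdVec n p + t' • stdVec n q, -(s' • stdVec n p + t' • stdVec n q)} := by
            rw [hWspan]
            exact bad_disjoint i j p q hij hpq hpi hpj hqi hqj s t s' t' hs ht hs' ht'
          have hfin : ({s • stdVec n i + t • stdVec n j, -(s • stdVec n i + t • stdVec n j),
              s' • stdVec n p + t' • stdVec n q, -(s' • stdVec n p + t' • stdVec n q)}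
              : Set (EuclideanSpace ℝ (Fin n))).Finite :=
            (((Set.finite_singleton _).insert _).insert _).insert _
          have := (Set.ncard_le_ncard hsub hfin).trans (ncard_le_four _ _ _ _)
          omega

lemma span_inj (i j k k' : Fin n) (hij : i ≠ j) (hki : k ≠ i) (hkj : k ≠ j)
    (hk'i : k' ≠ i) (hk'j : k' ≠ j) (s t u u' : ℝ)
    (hs : s = 1 ∨ s = -1) (ht : t = 1 ∨ t = -1) (hu : u = 1 ∨ u = -1) (hu' : u' = 1 ∨ u' = -1)
    (h : Submodule.span ℝ {s • stdVec n i + t • stdVec n j, s • stdVec n i + u • stdVec n k}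
       = Submodule.span ℝ {s • stdVec n i + t • stdVec n j, s • stdVec n i + u' • stdVec n k'}) :
    k = k' ∧ u = u' := by
  have hmem : s • stdVec n i + u' • stdVec n k' ∈
      Submodule.span ℝ {s • stdVec n i + t • stdVec n j, s • stdVec n i + u • stdVec n k} := by
    rw [h]
    exact Submodule.subset_span (by simp)
  obtain ⟨a, b, hab⟩ := Submodule.mem_span_pair.mp hmem
  have cv : ∀ m, a * ((s * if m = i then (1:ℝ) else 0) + t * if m = j then 1 else 0)
      + b * ((s * if m = i then (1:ℝ) else 0) + u * if m = k then 1 else 0)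
      = (s * if m = i then (1:ℝ) else 0) + u' * if m = k' then 1 else 0 := by
    intro m
    have := congrArg (fun v : EuclideanSpace ℝ (Fin n) => v m) hab
    simpa only [PiLp.add_apply, PiLp.smul_apply, smul_eq_mul, stdVec,
      EuclideanSpace.single_apply] using this
  have hkk : k = k' := by
    by_contra h0
    have h1 := cv k'
    rw [if_neg hk'i, if_neg hk'j, if_neg (fun h : k' = k => h0 h.symm), if_pos rfl] at h1
    have : u' = 0 := by linarith
    exact sgn_ne_zero hu' this
  subst hkk
  have ha : a = 0 := by
    have h1 := cv j
    rw [if_neg hij.symm, if_pos rfl, if_neg hkj.symm] at h1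
    have : a * t = 0 := by linarith
    rcases mul_eq_zero.mp this with h' | h'
    · exact h'
    · exact absurd h' (sgn_ne_zero ht)
  subst ha
  have hb : b = 1 := by
    have h1 := cv i
    rw [if_pos rfl, if_neg hij, if_neg (Ne.symm hki)] at h1
    rcases hs with rfl | rfl <;> linarith
  subst hb
  have h1 := cv k
  rw [if_neg hki, if_neg hkj, if_pos rfl] at h1
  constructor
  · rfl
  · linarith

noncomputable def planeOf (n : ℕ) (i j : Fin n) (s t : ℝ)
    (x : {k : Fin n // k ≠ i ∧ k ≠ j} × Bool) : Submodule ℝ (EuclideanSpace ℝ (Fin n)) :=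
  Submodule.span ℝ {s • stdVec n i + t • stdVec n j,
    s • stdVec n i + (if x.2 then (1:ℝ) else -1) • stdVec n x.1.1}

lemma bool_sign (b : Bool) :
    (if b then (1:ℝ) else -1) = 1 ∨ (if b then (1:ℝ) else -1) = -1 := by
  cases b <;> simp

lemma planeOf_inj (i j : Fin n) (hij : i ≠ j) (s t : ℝ)
    (hs : s = 1 ∨ s = -1) (ht : t = 1 ∨ t = -1) :
    Function.Injective (planeOf n i j s t) := by
  rintro ⟨⟨k, hki, hkj⟩, b⟩ ⟨⟨k', hk'i, hk'j⟩, b'⟩ h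
  obtain ⟨hk, hu⟩ := span_inj i j k k' hij hki hkj hk'i hk'j s t _ _ hs ht
    (bool_sign b) (bool_sign b') h
  have hb : b = b' := by
    cases b <;> cases b' <;> first | rfl | (exfalso; norm_num at hu)
  simp only [Prod.mk.injEq, Subtype.mk.injEq]
  exact ⟨hk, hb⟩

lemma card_index (i j : Fin n) (hij : i ≠ j) :
    Nat.card ({k : Fin n // k ≠ i ∧ k ≠ j} × Bool) = 2 * (n - 2) := by
  rw [Nat.card_prod, Nat.card_eq_fintype_card, Nat.card_eq_fintype_card, Fintype.card_bool]
  have hcard : Fintype.card {k : Fin n // k ≠ i ∧ k ≠ j} = n - 2 := by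
    rw [Fintype.card_subtype]
    have hfil : Finset.filter (fun k => k ≠ i ∧ k ≠ j) Finset.univ
        = (Finset.univ : Finset (Fin n)) \ {i, j} := by
      ext m
      simp [not_or]
    rw [hfil, Finset.card_sdiff_of_subset (by simp)]
    have : ({i, j} : Finset (Fin n)).card = 2 := by
      rw [Finset.card_insert_of_notMem (by simp [hij]), Finset.card_singleton]
    rw [this, Finset.card_univ, Fintype.card_fin]
  rw [hcard]
  ring

/-- in `D_n` (`n ≥ 4`), every root lies in exactly `2(n-2)` irreducible
admissible two-dimensional subspaces (those `W` with `|D_n ∩ W| ≥ 5`), i.e.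
`γ(D_n) = 2(n-2)`; moreover each such subspace meets `D_n` in a subsystem of type `A_2`
(exactly 6 roots). -/
theorem stmt12 (n : ℕ) (hn : 4 ≤ n)
    (α : EuclideanSpace ℝ (Fin n)) (hα : α ∈ Droots n) :
    ({W : Submodule ℝ (EuclideanSpace ℝ (Fin n)) |
        Module.finrank ℝ W = 2 ∧
        5 ≤ (Droots n ∩ (W : Set (EuclideanSpace ℝ (Fin n)))).ncard ∧
        α ∈ W}.ncard = 2 * (n - 2)) ∧
    ∀ W : Submodule ℝ (EuclideanSpace ℝ (Fin n)),
      Module.finrank ℝ W = 2 →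
      5 ≤ (Droots n ∩ (W : Set (EuclideanSpace ℝ (Fin n)))).ncard →
      α ∈ W →
      (Droots n ∩ (W : Set (EuclideanSpace ℝ (Fin n)))).ncard = 6 := by
  classical
  obtain ⟨i, j, hij, s, t, hs, ht, rfl⟩ := hα
  have hmore : ∀ W : Submodule ℝ (EuclideanSpace ℝ (Fin n)),
      Module.finrank ℝ W = 2 →
      5 ≤ (Droots n ∩ (W : Set (EuclideanSpace ℝ (Fin n)))).ncard →
      s • stdVec n i + t • stdVec n j ∈ W →
      (Droots n ∩ (W : Set (EuclideanSpace ℝ (Fin n)))).ncard = 6 := by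
    intro W h2 h5 hW
    obtain ⟨k, u, hki, hkj, hu, rfl⟩ := classify i j hij s t hs ht W h2 h5 hW
    rw [inter_span_eq i j k hij (Ne.symm hki) (Ne.symm hkj) s t u hs ht hu]
    exact ncard_six i j k hij (Ne.symm hki) (Ne.symm hkj) s t u hs ht hu
  refine ⟨?_, hmore⟩
  have hset : {W : Submodule ℝ (EuclideanSpace ℝ (Fin n)) |
        Module.finrank ℝ W = 2 ∧
        5 ≤ (Droots n ∩ (W : Set (EuclideanSpace ℝ (Fin n)))).ncard ∧
        s • stdVec n i + t • stdVec n j ∈ W}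
      = Set.range (planeOf n i j s t) := by
    ext W
    simp only [Set.mem_setOf_eq, Set.mem_range]
    constructor
    · rintro ⟨h2, h5, hW⟩
      obtain ⟨k, u, hki, hkj, hu, rfl⟩ := classify i j hij s t hs ht W h2 h5 hW
      refine ⟨⟨⟨k, hki, hkj⟩, if u = 1 then true else false⟩, ?_⟩
      unfold planeOf
      rcases hu with rfl | rfl <;> norm_num
    · rintro ⟨⟨⟨k, hki, hkj⟩, b⟩, rfl⟩
      have hu := bool_sign b
      have hik : i ≠ k := Ne.symm hki
      have hjk : j ≠ k := Ne.symm hkj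
      have hαr := mem_droots i j hij s t hs ht
      have hβr := mem_droots i k hik s _ hs hu
      have c1 : (s • stdVec n i + t • stdVec n j) j = t := by
        rw [pair_apply]; simp [hij.symm]
      have c2 : (s • stdVec n i + (if b then (1:ℝ) else -1) • stdVec n k) j = 0 := by
        rw [pair_apply]; simp [hij.symm, hjk]
      have c3 : (s • stdVec n i + (if b then (1:ℝ) else -1) • stdVec n k) i = s := by
        rw [pair_apply]; simp [hik]
      have c4 : (s • stdVec n i + t • stdVec n j) i = s := by
        rw [pair_apply]; simp [hij]
      have hβα : s • stdVec n i + (if b then (1:ℝ) else -1) • stdVec n k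
          ≠ s • stdVec n i + t • stdVec n j := by
        apply vec_ne j
        rw [c1, c2]
        exact fun h => sgn_ne_zero ht h.symm
      have hβα' : s • stdVec n i + (if b then (1:ℝ) else -1) • stdVec n k
          ≠ -(s • stdVec n i + t • stdVec n j) := by
        apply vec_ne i
        rw [c3, PiLp.neg_apply, c4]
        rcases hs with rfl | rfl <;> norm_num
      refine ⟨?_, ?_, ?_⟩
      · exact finrank_span_pair (root_not_prop hαr hβr hβα hβα')
      · rw [show planeOf n i j s t ⟨⟨k, hki, hkj⟩, b⟩ = Submodule.span ℝ
            {s • stdVec n i + t • stdVec n j,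
             s • stdVec n i + (if b then (1:ℝ) else -1) • stdVec n k} from rfl,
          inter_span_eq i j k hij hik hjk s t _ hs ht hu,
          ncard_six i j k hij hik hjk s t _ hs ht hu]
        norm_num
      · exact Submodule.subset_span (Set.mem_insert _ _)
  rw [hset, ← Set.image_univ, Set.ncard_image_of_injective _ (planeOf_inj i j hij s t hs ht),
    Set.ncard_univ, card_index i j hij]
end
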